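/- arXiv:2412.07478 — 5 statements merged into one kernel-verified Lean document; each statement's English description precedes it below -/
import Mathlib

section
/- Let B be an m×ℓ real constant matrix, C an m×n real constant matrix of full row rank, and Ω an n×ℓ random matrix (n ≥ ℓ) whose entries are independent random variables such that P(ω_{ij} = c) = 0 for every real c. Then for any s×t submatrix Φ of M = B + CΩ, rank(Φ) = min{s,t} with probability one. -/
open MeasureTheory ProbabilityTheory Matrix


private lemma measurable_mvpoly_eval {ι : Type*} (p : MvPolynomial ι ℝ) :
    Measurable fun x : ι → ℝ => MvPolynomial.eval x p := by
  induction p using MvPolynomial.induction_on with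
  | C a => simp
  | add p q hp hq => simp only [map_add]; exact hp.add hq
  | mul_X p i hp => simp only [map_mul, MvPolynomial.eval_X]; exact hp.mul (measurable_pi_apply i)

private lemma pi_eval_zero_null_fin : ∀ {N : ℕ} (ν : Fin N → Measure ℝ),
    (∀ i, IsProbabilityMeasure (ν i)) → (∀ i (c : ℝ), ν i {c} = 0) →
    ∀ (p : MvPolynomial (Fin N) ℝ), p ≠ 0 →
    Measure.pi ν {x | MvPolynomial.eval x p = 0} = 0 := by
  intro N
  induction N with
  | zero =>
    intro ν _ _ p hp
    obtain ⟨a, rfl⟩ := MvPolynomial.C_surjective (Fin 0) p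
    have ha : a ≠ 0 := fun h => hp (by simp [h])
    convert measure_empty (μ := Measure.pi ν)
    ext x
    simp [ha]
  | succ N ih =>
    intro ν hprob hatom p hp
    haveI := hprob
    -- notation
    set q := MvPolynomial.finSuccEquiv ℝ N p with hqdef
    have hq0 : q ≠ 0 := by
      intro h
      exact hp ((map_eq_zero_iff _ (MvPolynomial.finSuccEquiv ℝ N).injective).mp h)
    set d := q.natDegree with hd
    have hcoeff : q.coeff d ≠ 0 := Polynomial.leadingCoeff_ne_zero.mpr hq0
    set νr : Fin N → Measure ℝ := fun j => ν j.succ with hνr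
    haveI : ∀ j, IsProbabilityMeasure (νr j) := fun j => hprob _
    haveI : NullSingletonClass (ν 0) := ⟨fun c => hatom 0 c⟩
    -- the measurable equiv
    set e := MeasurableEquiv.piFinSuccAbove (fun _ : Fin (N + 1) => ℝ) 0 with hedef
    have he : ∀ (y : ℝ) (z : Fin N → ℝ), e.symm (y, z) = Fin.cons y z := by
      intro y z
      show (Fin.insertNthEquiv (fun _ : Fin (N+1) => ℝ) 0) (y, z) = Fin.cons y z
      simp [Fin.insertNthEquiv, Fin.insertNth_zero']
    set S : Set (Fin (N + 1) → ℝ) := {x | MvPolynomial.eval x p = 0} with hS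
    have hSm : MeasurableSet S := measurable_mvpoly_eval p (measurableSet_singleton 0)
    set T : Set (ℝ × (Fin N → ℝ)) := e.symm ⁻¹' S with hT
    have hTm : MeasurableSet T := e.symm.measurable hSm
    have hpre : e ⁻¹' T = S := by
      ext x; simp [hT]
    have hmp := MeasureTheory.measurePreserving_piFinSuccAbove ν 0
    have hprod : ((ν 0).prod (Measure.pi fun j => ν ((0 : Fin (N+1)).succAbove j))) T =
        Measure.pi ν S := by
      rw [← hmp.map_eq, Measure.map_apply e.measurable hTm, hpre]
    have hsa : (fun j : Fin N => ν ((0 : Fin (N+1)).succAbove j)) = νr := by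
      funext j; simp [hνr, Fin.succAbove_zero]
    rw [hsa] at hprod
    rw [← hprod]
    -- swap
    have hswap : ((ν 0).prod (Measure.pi νr)) T
        = ((Measure.pi νr).prod (ν 0)) (Prod.swap ⁻¹' T) := by
      rw [← Measure.prod_swap, Measure.map_apply measurable_swap hTm]
    rw [hswap]
    rw [Measure.measure_prod_null (measurable_swap hTm)]
    -- bad set of z
    have hZ : Measure.pi νr {z | MvPolynomial.eval z (q.coeff d) = 0} = 0 :=
      ih νr (fun j => hprob _) (fun j c => hatom _ c) (q.coeff d) hcoeff
    have hae : ∀ᵐ z ∂Measure.pi νr, MvPolynomial.eval z (q.coeff d) ≠ 0 := by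
      rw [ae_iff]
      simpa using hZ
    filter_upwards [hae] with z hz
    have hqz : (q.map (MvPolynomial.eval z)) ≠ 0 := by
      intro h
      apply hz
      have := congrArg (fun r => Polynomial.coeff r d) h
      simpa [Polynomial.coeff_map] using this
    have hslice : (Prod.mk z ⁻¹' (Prod.swap ⁻¹' T))
        = {y | Polynomial.eval y (q.map (MvPolynomial.eval z)) = 0} := by
      ext y
      simp only [Set.mem_preimage, Prod.swap_prod_mk, hT, Set.mem_setOf_eq, he y z, hS]
      rw [MvPolynomial.eval_eq_eval_mv_eval']
    show (ν 0) (Prod.mk z ⁻¹' (Prod.swap ⁻¹' T)) = 0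
    rw [hslice]
    have : {y : ℝ | Polynomial.eval y (q.map (MvPolynomial.eval z)) = 0}.Finite :=
      Polynomial.finite_setOf_isRoot hqz
    exact this.measure_zero _

private lemma pi_eval_zero_null {ι : Type*} [Fintype ι] (ν : ι → Measure ℝ)
    (hprob : ∀ i, IsProbabilityMeasure (ν i)) (hatom : ∀ i (c : ℝ), ν i {c} = 0)
    (p : MvPolynomial ι ℝ) (hp : p ≠ 0) :
    Measure.pi ν {x | MvPolynomial.eval x p = 0} = 0 := by
  haveI := hprob
  set e : Fin (Fintype.card ι) ≃ ι := (Fintype.equivFin ι).symm with hedef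
  have hmp := MeasureTheory.measurePreserving_piCongrLeft ν e
  set g := MeasurableEquiv.piCongrLeft (fun _ : ι => ℝ) e with hg
  have hgapp : ∀ (x : Fin (Fintype.card ι) → ℝ) (i : ι), g x i = x (e.symm i) := by
    intro x i
    conv_lhs => rw [show i = e (e.symm i) by simp]
    show Equiv.piCongrLeft (fun _ : ι => ℝ) e x (e (e.symm i)) = _
    rw [Equiv.piCongrLeft_apply_apply]
  set S : Set (ι → ℝ) := {x | MvPolynomial.eval x p = 0} with hS
  have hSm : MeasurableSet S := measurable_mvpoly_eval p (measurableSet_singleton 0)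
  have hq : MvPolynomial.rename e.symm p ≠ 0 := by
    intro h
    exact hp (MvPolynomial.rename_injective _ e.symm.injective (by simpa using h))
  have : (g : (Fin (Fintype.card ι) → ℝ) → (ι → ℝ)) ⁻¹' S
      = {x | MvPolynomial.eval x (MvPolynomial.rename e.symm p) = 0} := by
    ext x
    simp only [Set.mem_preimage, hS, Set.mem_setOf_eq, MvPolynomial.eval_rename]
    rw [show (g x : ι → ℝ) = x ∘ e.symm from funext (hgapp x)]
  rw [← hmp.map_eq, Measure.map_apply g.measurable hSm, this]
  exact pi_eval_zero_null_fin _ (fun j => hprob _) (fun j c => hatom _ c) _ hq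



private lemma map_joint_eq_pi {ι : Type*} [Fintype ι] {Ω₀ : Type*} [MeasurableSpace Ω₀]
    (μ : Measure Ω₀) [IsProbabilityMeasure μ] (f : ι → Ω₀ → ℝ)
    (hmeas : ∀ i, Measurable (f i))
    (hindep : iIndepFun (m := fun _ : ι => (inferInstance : MeasurableSpace ℝ)) f μ) :
    μ.map (fun x i => f i x) = Measure.pi (fun i => μ.map (f i)) := by
  haveI : ∀ i, IsProbabilityMeasure (μ.map (f i)) :=
    fun i => Measure.isProbabilityMeasure_map (hmeas i).aemeasurable
  have hJ : Measurable (fun x i => f i x) := measurable_pi_iff.mpr hmeas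
  refine (Measure.pi_eq (μ := fun i => μ.map (f i)) fun s hs => ?_).symm
  rw [Measure.map_apply hJ (MeasurableSet.univ_pi hs)]
  have hset : (fun x i => f i x) ⁻¹' Set.pi Set.univ s
      = ⋂ i ∈ (Finset.univ : Finset ι), f i ⁻¹' s i := by
    ext x; simp [Set.mem_pi]
  rw [hset, hindep.measure_inter_preimage_eq_mul Finset.univ (fun i _ => hs i)]
  exact Finset.prod_congr rfl fun i _ => (Measure.map_apply (hmeas i) (hs i)).symm

private lemma rank_submatrix_le'' {s t k : ℕ} (A : Matrix (Fin s) (Fin t) ℝ)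
    (ri : Fin k → Fin s) (ci : Fin k → Fin t) :
    (A.submatrix ri ci).rank ≤ A.rank := by
  have h1 : A.submatrix ri ci =
      ((1 : Matrix (Fin s) (Fin s) ℝ).submatrix ri id) * A *
        ((1 : Matrix (Fin t) (Fin t) ℝ).submatrix id ci) := by
    ext a b
    simp [Matrix.mul_apply, Matrix.one_apply, Finset.sum_ite_eq, ite_and]
  rw [h1]
  exact le_trans (Matrix.rank_mul_le_left _ _) (Matrix.rank_mul_le_right _ _)

/-- Let `B` be an `m×ℓ` real constant matrix, `C` an `m×n` real constant
matrix of full row rank, and `Ω` an `n×ℓ` random matrix (`n ≥ ℓ`) whose entries are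
independent random variables with atomless distributions.  Then every `s×t` submatrix `Φ`
of `M = B + CΩ` has `rank Φ = min s t` almost surely. -/
theorem rank_submatrix_add_mul_random_eq_min
    {m ℓ n : ℕ} (hnl : ℓ ≤ n)
    (B : Matrix (Fin m) (Fin ℓ) ℝ) (C : Matrix (Fin m) (Fin n) ℝ)
    (hC : C.rank = m)
    {Ω₀ : Type*} [MeasurableSpace Ω₀] (μ : Measure Ω₀) [IsProbabilityMeasure μ]
    (ω : Ω₀ → Matrix (Fin n) (Fin ℓ) ℝ)
    (hmeas : ∀ i j, Measurable fun x => ω x i j)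
    (hindep : iIndepFun (m := fun _ : Fin n × Fin ℓ => (inferInstance : MeasurableSpace ℝ))
      (fun p x => ω x p.1 p.2) μ)
    (hatomless : ∀ i j (c : ℝ), μ {x | ω x i j = c} = 0)
    (s t : ℕ) (hs1 : 1 ≤ s) (hsm : s ≤ m) (ht1 : 1 ≤ t) (htl : t ≤ ℓ)
    (r : Fin s → Fin m) (c : Fin t → Fin ℓ)
    (hr : Function.Injective r) (hc : Function.Injective c) :
    ∀ᵐ x ∂μ, ((B + C * ω x).submatrix r c).rank = min s t := by
  classical
  set k := min s t with hk
  have hks : k ≤ s := min_le_left _ _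
  have hkt : k ≤ t := min_le_right _ _
  set ri : Fin k → Fin s := Fin.castLE hks with hri
  set ci : Fin k → Fin t := Fin.castLE hkt with hci
  set Pm : Matrix (Fin k) (Fin k) (MvPolynomial (Fin n × Fin ℓ) ℝ) :=
    Matrix.of (fun a b => MvPolynomial.C (B (r (ri a)) (c (ci b))) +
      ∑ j : Fin n, MvPolynomial.C (C (r (ri a)) j) * MvPolynomial.X (j, c (ci b))) with hPm
  set p := Pm.det with hpdef
  have heval : ∀ W : Matrix (Fin n) (Fin ℓ) ℝ,
      MvPolynomial.eval (fun q : Fin n × Fin ℓ => W q.1 q.2) p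
        = (((B + C * W).submatrix r c).submatrix ri ci).det := by
    intro W
    rw [hpdef, RingHom.map_det]
    congr 1
    ext a b
    simp [hPm, Matrix.mul_apply]
  -- right inverse of C
  have hrange : LinearMap.range C.mulVecLin = ⊤ := by
    apply Submodule.eq_top_of_finrank_eq
    have h1 := hC
    rw [Matrix.rank] at h1
    rw [h1, Module.finrank_pi]
    simp
  obtain ⟨g, hg⟩ := C.mulVecLin.exists_rightInverse_of_surjective hrange
  set D := LinearMap.toMatrix' g with hD
  have hCD : C * D = 1 := by
    apply Matrix.toLin'.injective
    rw [Matrix.toLin'_mul, Matrix.toLin'_one, Matrix.toLin'_apply' C, hD, Matrix.toLin'_toMatrix']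
    exact hg
  set A : Matrix (Fin m) (Fin ℓ) ℝ :=
    Matrix.of (fun i j => if ∃ a : Fin k, r (ri a) = i ∧ c (ci a) = j then 1 else 0) with hA
  set W₀ := D * (A - B) with hW
  have hBW : B + C * W₀ = A := by
    rw [hW, ← Matrix.mul_assoc, hCD, Matrix.one_mul]
    abel
  have hsub : (A.submatrix r c).submatrix ri ci = 1 := by
    ext a b
    simp only [Matrix.submatrix_apply, hA, Matrix.of_apply, Matrix.one_apply]
    by_cases hab : a = b
    · subst hab
      rw [if_pos ⟨a, rfl, rfl⟩, if_pos rfl]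
    · rw [if_neg, if_neg hab]
      rintro ⟨a', h1, h2⟩
      exact hab ((Fin.castLE_injective hks (hr h1)).symm.trans (Fin.castLE_injective hkt (hc h2)))
  have hp0 : p ≠ 0 := by
    intro h
    have h1 := heval W₀
    rw [hBW, hsub, h] at h1
    simp at h1
  -- measure part
  set J : Ω₀ → (Fin n × Fin ℓ) → ℝ := fun x (q : Fin n × Fin ℓ) => ω x q.1 q.2 with hJ
  have hJm : Measurable J := measurable_pi_iff.mpr (fun q => hmeas q.1 q.2)
  have hmap := map_joint_eq_pi μ (fun (q : Fin n × Fin ℓ) x => ω x q.1 q.2) (fun q => hmeas q.1 q.2) hindep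
  have hnull : μ {x | MvPolynomial.eval (J x) p = 0} = 0 := by
    have hSm : MeasurableSet {v : (Fin n × Fin ℓ) → ℝ | MvPolynomial.eval v p = 0} :=
      measurable_mvpoly_eval p (measurableSet_singleton 0)
    have hset : {x | MvPolynomial.eval (J x) p = 0}
        = J ⁻¹' {v | MvPolynomial.eval v p = 0} := rfl
    rw [hset, ← Measure.map_apply hJm hSm]
    rw [show μ.map J = Measure.pi (fun q : Fin n × Fin ℓ => μ.map (fun x => ω x q.1 q.2))
      from hmap]
    refine pi_eval_zero_null (fun q : Fin n × Fin ℓ => μ.map (fun x => ω x q.1 q.2))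
      (fun q => Measure.isProbabilityMeasure_map (hmeas q.1 q.2).aemeasurable) ?_ p hp0
    intro q cc
    rw [Measure.map_apply (hmeas q.1 q.2) (measurableSet_singleton cc)]
    exact hatomless q.1 q.2 cc
  have hane : ∀ᵐ x ∂μ, MvPolynomial.eval (J x) p ≠ 0 := by
    rw [ae_iff]
    simpa using hnull
  filter_upwards [hane] with x hx
  have hdet : (((B + C * ω x).submatrix r c).submatrix ri ci).det ≠ 0 := by
    rw [← heval (ω x)]
    exact hx
  refine le_antisymm (le_min (Matrix.rank_le_height _) (Matrix.rank_le_width _)) ?_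
  have h1 : (((B + C * ω x).submatrix r c).submatrix ri ci).rank = k := by
    rw [Matrix.rank_of_isUnit _ ((Matrix.isUnit_iff_isUnit_det _).mpr
      (isUnit_iff_ne_zero.mpr hdet))]
    simp
  have h2 := rank_submatrix_le'' ((B + C * ω x).submatrix r c) ri ci
  rw [h1] at h2
  exact h2
end

section
/- Let F ∈ ℝ^{m×k}, C ∈ ℝ^{n×k} with orthonormal columns, and G ∈ ℝ^{ℓ×q} be constant matrices, and let Ω ∈ ℝ^{n×ℓ} have i.i.d. entries uniform on [−√3, √3]. Then for H = CᵀΩ one has E(‖F H G‖_F²) = ‖F‖_F² · ‖G‖_F². -/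
open MeasureTheory ProbabilityTheory Matrix

/-- Squared Frobenius norm of a real matrix. -/
noncomputable def frobNormSq {m n : ℕ} (A : Matrix (Fin m) (Fin n) ℝ) : ℝ :=
  ∑ i, ∑ j, (A i j) ^ 2

namespace SandwichAux

variable {Ω₀ : Type*} [MeasurableSpace Ω₀] (μ : Measure Ω₀)

noncomputable def sq3 : ℝ := Real.sqrt 3

lemma sq3_pos : 0 < sq3 := Real.sqrt_pos.mpr (by norm_num)

noncomputable abbrev I3 : Set ℝ := Set.Icc (-(Real.sqrt 3)) (Real.sqrt 3)

lemma vol_I3 : (volume I3) = ENNReal.ofReal (2 * Real.sqrt 3) := by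
  rw [Real.volume_Icc]
  norm_num
  ring_nf
  rw [ENNReal.ofReal_mul (Real.sqrt_nonneg 3)]
  simp

lemma vol_I3_ne_zero : volume I3 ≠ 0 := by
  rw [vol_I3]; simp [ENNReal.ofReal_eq_zero, not_le]
  try positivity

lemma vol_I3_ne_top : volume I3 ≠ ⊤ := by rw [vol_I3]; exact ENNReal.ofReal_ne_top

/-- Integral of a function of a uniform rv. -/
lemma unif_integral {X : Ω₀ → ℝ} (hX : Measurable X) (hu : pdf.IsUniform X I3 μ)
    (g : ℝ → ℝ) (hg : Measurable g) :
    ∫ x, g (X x) ∂μ = (2 * Real.sqrt 3)⁻¹ * ∫ y in I3, g y := by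
  have h1 : ∫ x, g (X x) ∂μ = ∫ y, g y ∂(Measure.map X μ) :=
    (integral_map hX.aemeasurable hg.aestronglyMeasurable).symm
  rw [h1, hu]
  unfold ProbabilityTheory.cond
  rw [integral_smul_measure, vol_I3, ENNReal.toReal_inv, ENNReal.toReal_ofReal (by positivity)]
  simp [smul_eq_mul]

lemma unif_mean_zero {X : Ω₀ → ℝ} (hX : Measurable X) (hu : pdf.IsUniform X I3 μ) :
    ∫ x, X x ∂μ = 0 := by
  have := unif_integral μ hX hu id measurable_id
  simp only [id] at this
  rw [this]
  have h2 : ∫ y in I3, y = ∫ y in (-(Real.sqrt 3))..(Real.sqrt 3), y := by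
    rw [intervalIntegral.integral_of_le (by nlinarith [Real.sqrt_nonneg 3]), MeasureTheory.integral_Icc_eq_integral_Ioc]
  rw [h2, integral_id]
  ring

lemma unif_sq_one {X : Ω₀ → ℝ} (hX : Measurable X) (hu : pdf.IsUniform X I3 μ) :
    ∫ x, (X x) ^ 2 ∂μ = 1 := by
  have := unif_integral μ hX hu (fun y => y ^ 2) (by measurability)
  rw [this]
  have h2 : ∫ y in I3, y ^ 2 = ∫ y in (-(Real.sqrt 3))..(Real.sqrt 3), y ^ 2 := by
    rw [intervalIntegral.integral_of_le (by nlinarith [Real.sqrt_nonneg 3]), MeasureTheory.integral_Icc_eq_integral_Ioc]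
  rw [h2]
  rw [integral_pow]
  have h3 : Real.sqrt 3 ^ 3 = 3 * Real.sqrt 3 := by
    rw [pow_succ, Real.sq_sqrt (by norm_num : (3:ℝ) ≥ 0)]
  have hs : Real.sqrt 3 ≠ 0 := ne_of_gt sq3_pos
  field_simp
  ring_nf
  rw [h3]
  ring

lemma unif_ae_bound {X : Ω₀ → ℝ} (hX : Measurable X) (hu : pdf.IsUniform X I3 μ) :
    ∀ᵐ x ∂μ, |X x| ≤ Real.sqrt 3 := by
  have hpre : μ (X ⁻¹' I3ᶜ) = 0 := by
    rw [hu.measure_preimage vol_I3_ne_zero vol_I3_ne_top ((measurableSet_Icc : MeasurableSet I3).compl)]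
    simp
  rw [ae_iff]
  refine measure_mono_null ?_ hpre
  intro x hx
  simp only [Set.mem_setOf_eq, not_le] at hx
  simp only [Set.mem_preimage, Set.mem_compl_iff, Set.mem_Icc, not_and_or, not_le]
  have h2 : ¬(|X x| ≤ Real.sqrt 3) := not_le.mpr hx
  rw [abs_le, not_and_or, not_le, not_le] at h2
  exact h2

variable [IsProbabilityMeasure μ]

lemma expectation_sq_sum {ι : Type*} [Fintype ι] (X : ι → Ω₀ → ℝ)
    (hmeas : ∀ p, Measurable (X p))
    (hbdd : ∀ p, ∀ᵐ x ∂μ, |X p x| ≤ Real.sqrt 3)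
    (hzero : ∀ p, ∫ x, X p x ∂μ = 0)
    (hone : ∀ p, ∫ x, (X p x) ^ 2 ∂μ = 1)
    (hind : ∀ p q, p ≠ q → IndepFun (X p) (X q) μ)
    (c : ι → ℝ) :
    ∫ x, (∑ p, c p * X p x) ^ 2 ∂μ = ∑ p, (c p) ^ 2 := by
  classical
  have hprod : ∀ p q : ι, Integrable (fun x => X p x * X q x) μ := by
    intro p q
    refine Integrable.mono' (integrable_const 3) ((hmeas p).mul (hmeas q)).aestronglyMeasurable ?_
    filter_upwards [hbdd p, hbdd q] with x h1 h2
    rw [Real.norm_eq_abs, abs_mul]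
    calc |X p x| * |X q x| ≤ Real.sqrt 3 * Real.sqrt 3 :=
          mul_le_mul h1 h2 (abs_nonneg _) (Real.sqrt_nonneg 3)
      _ = 3 := Real.mul_self_sqrt (by norm_num)
  have hpq : ∀ p q : ι, ∫ x, X p x * X q x ∂μ = if p = q then 1 else 0 := by
    intro p q
    split_ifs with h
    · subst h
      have := hone p
      simpa [sq] using this
    · have hi := ProbabilityTheory.IndepFun.integral_mul_eq_mul_integral (hind p q h) (hmeas p).aestronglyMeasurable
        (hmeas q).aestronglyMeasurable
      have : ∫ x, X p x * X q x ∂μ = (∫ x, X p x ∂μ) * ∫ x, X q x ∂μ := hi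
      rw [this, hzero p, hzero q, mul_zero]
  have step1 : ∀ x, (∑ p, c p * X p x) ^ 2 = ∑ p, ∑ q, (c p * c q) * (X p x * X q x) := by
    intro x
    rw [sq, Finset.sum_mul_sum]
    exact Finset.sum_congr rfl fun p _ => Finset.sum_congr rfl fun q _ => by ring
  calc ∫ x, (∑ p, c p * X p x) ^ 2 ∂μ
      = ∫ x, ∑ p, ∑ q, (c p * c q) * (X p x * X q x) ∂μ := by
        congr 1; funext x; exact step1 x
    _ = ∑ p, ∑ q, ∫ x, (c p * c q) * (X p x * X q x) ∂μ := by
        rw [integral_finset_sum _ fun p _ => integrable_finset_sum _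
          fun q _ => (hprod p q).const_mul _]
        exact Finset.sum_congr rfl fun p _ => integral_finset_sum _
          fun q _ => (hprod p q).const_mul _
    _ = ∑ p, ∑ q, (c p * c q) * (if p = q then 1 else 0) := by
        exact Finset.sum_congr rfl fun p _ => Finset.sum_congr rfl fun q _ => by
          rw [MeasureTheory.integral_const_mul, hpq p q]
    _ = ∑ p, (c p) ^ 2 := by
        refine Finset.sum_congr rfl fun p _ => ?_
        rw [Finset.sum_eq_single p]
        · simp [sq]
        · intro q _ hq; simp [Ne.symm hq]
        · intro h; exact absurd (Finset.mem_univ p) h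

lemma sq_sum_integrable {ι : Type*} [Fintype ι] (X : ι → Ω₀ → ℝ)
    (hmeas : ∀ p, Measurable (X p))
    (hbdd : ∀ p, ∀ᵐ x ∂μ, |X p x| ≤ Real.sqrt 3)
    (c : ι → ℝ) :
    Integrable (fun x => (∑ p, c p * X p x) ^ 2) μ := by
  refine Integrable.mono' (integrable_const ((∑ p, |c p| * Real.sqrt 3) ^ 2))
    ?_ ?_
  · exact ((Finset.univ.measurable_sum fun p _ =>
      (hmeas p).const_mul (c p)).pow_const 2).aestronglyMeasurable
  · have hae : ∀ᵐ x ∂μ, ∀ p, |X p x| ≤ Real.sqrt 3 := ae_all_iff.mpr hbdd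
    filter_upwards [hae] with x hx
    rw [Real.norm_eq_abs, abs_pow, ← abs_pow]
    rw [abs_pow]
    refine pow_le_pow_left₀ (abs_nonneg _) ?_ 2
    calc |∑ p, c p * X p x| ≤ ∑ p, |c p * X p x| := Finset.abs_sum_le_sum_abs _ _
      _ ≤ ∑ p, |c p| * Real.sqrt 3 := Finset.sum_le_sum fun p _ => by
          rw [abs_mul]
          exact mul_le_mul_of_nonneg_left (hx p) (abs_nonneg _)

end SandwichAux



lemma SandwichAux.frob_trace {a b : ℕ} (M : Matrix (Fin a) (Fin b) ℝ) :
    frobNormSq M = (M * Mᵀ).trace := by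
  simp [frobNormSq, Matrix.trace, Matrix.mul_apply, Matrix.diag, sq]

lemma SandwichAux.frob_mul_orth {m k n : ℕ} (F : Matrix (Fin m) (Fin k) ℝ)
    (C : Matrix (Fin n) (Fin k) ℝ) (hC : Cᵀ * C = 1) :
    frobNormSq (F * Cᵀ) = frobNormSq F := by
  rw [SandwichAux.frob_trace, SandwichAux.frob_trace F]
  rw [Matrix.transpose_mul, Matrix.transpose_transpose, Matrix.mul_assoc,
    ← Matrix.mul_assoc Cᵀ C Fᵀ, hC, Matrix.one_mul]

/-- Let `F ∈ ℝ^{m×k}`, `C ∈ ℝ^{n×k}` with orthonormal columns, and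
`G ∈ ℝ^{ℓ×q}` be constant matrices, and let `Ω ∈ ℝ^{n×ℓ}` have independent entries
uniform on `[−√3, √3]`.  Then for `H = CᵀΩ` one has
`E(‖F H G‖_F²) = ‖F‖_F² · ‖G‖_F²`. -/
theorem expectation_frobNormSq_sandwich
    {m k n ℓ q : ℕ}
    (F : Matrix (Fin m) (Fin k) ℝ)
    (C : Matrix (Fin n) (Fin k) ℝ) (hC : Cᵀ * C = 1)
    (G : Matrix (Fin ℓ) (Fin q) ℝ)
    {Ω₀ : Type*} [MeasurableSpace Ω₀] (μ : Measure Ω₀) [IsProbabilityMeasure μ]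
    (ω : Ω₀ → Matrix (Fin n) (Fin ℓ) ℝ)
    (hmeas : ∀ i j, Measurable fun x => ω x i j)
    (hindep : iIndepFun
      (fun (p : Fin n × Fin ℓ) x => ω x p.1 p.2) μ)
    (hunif : ∀ i j, pdf.IsUniform (fun x => ω x i j)
      (Set.Icc (-(Real.sqrt 3)) (Real.sqrt 3)) μ) :
    (∫ x, frobNormSq (F * (Cᵀ * ω x) * G) ∂μ) = frobNormSq F * frobNormSq G := by
  classical
  set A := F * Cᵀ with hA
  set X : (Fin n × Fin ℓ) → Ω₀ → ℝ := fun p x => ω x p.1 p.2 with hX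
  set c : Fin m → Fin q → (Fin n × Fin ℓ) → ℝ := fun i j p => A i p.1 * G p.2 j with hc
  have hXmeas : ∀ p, Measurable (X p) := fun p => hmeas p.1 p.2
  have hXbdd : ∀ p, ∀ᵐ x ∂μ, |X p x| ≤ Real.sqrt 3 :=
    fun p => SandwichAux.unif_ae_bound μ (hXmeas p) (hunif p.1 p.2)
  have hXzero : ∀ p, ∫ x, X p x ∂μ = 0 :=
    fun p => SandwichAux.unif_mean_zero μ (hXmeas p) (hunif p.1 p.2)
  have hXone : ∀ p, ∫ x, (X p x) ^ 2 ∂μ = 1 :=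
    fun p => SandwichAux.unif_sq_one μ (hXmeas p) (hunif p.1 p.2)
  have hXind : ∀ p q', p ≠ q' → IndepFun (X p) (X q') μ :=
    fun p q' hpq => hindep.indepFun hpq
  have hentry : ∀ x (i : Fin m) (j : Fin q),
      (F * (Cᵀ * ω x) * G) i j = ∑ p : Fin n × Fin ℓ, c i j p * X p x := by
    intro x i j
    rw [← Matrix.mul_assoc, ← hA]
    rw [Matrix.mul_apply]
    simp_rw [Matrix.mul_apply, Finset.sum_mul, Fintype.sum_prod_type]
    rw [Finset.sum_comm]
    exact Finset.sum_congr rfl fun a _ => Finset.sum_congr rfl fun b _ => by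
      simp only [hc, hX]; ring
  have hint : ∀ (i : Fin m) (j : Fin q),
      ∫ x, (∑ p : Fin n × Fin ℓ, c i j p * X p x) ^ 2 ∂μ = ∑ p : Fin n × Fin ℓ, (c i j p) ^ 2 :=
    fun i j => SandwichAux.expectation_sq_sum μ X hXmeas hXbdd hXzero hXone hXind (c i j)
  have hinteg : ∀ (i : Fin m) (j : Fin q),
      Integrable (fun x => (∑ p : Fin n × Fin ℓ, c i j p * X p x) ^ 2) μ :=
    fun i j => SandwichAux.sq_sum_integrable μ X hXmeas hXbdd (c i j)
  calc (∫ x, frobNormSq (F * (Cᵀ * ω x) * G) ∂μ)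
      = ∫ x, ∑ i, ∑ j, (∑ p : Fin n × Fin ℓ, c i j p * X p x) ^ 2 ∂μ := by
        congr 1; funext x
        rw [frobNormSq]
        exact Finset.sum_congr rfl fun i _ => Finset.sum_congr rfl fun j _ => by
          rw [hentry x i j]
    _ = ∑ i, ∑ j, ∫ x, (∑ p : Fin n × Fin ℓ, c i j p * X p x) ^ 2 ∂μ := by
        rw [integral_finset_sum _ fun i _ => integrable_finset_sum _ fun j _ => hinteg i j]
        exact Finset.sum_congr rfl fun i _ => integral_finset_sum _ fun j _ => hinteg i j
    _ = ∑ i, ∑ j, ∑ p : Fin n × Fin ℓ, (c i j p) ^ 2 :=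
        Finset.sum_congr rfl fun i _ => Finset.sum_congr rfl fun j _ => hint i j
    _ = frobNormSq A * frobNormSq G := by
        simp only [frobNormSq, hc, Fintype.sum_prod_type, mul_pow]
        calc ∑ i, ∑ j, ∑ a, ∑ b, A i a ^ 2 * G b j ^ 2
            = ∑ i, ∑ j, (∑ a, A i a ^ 2) * (∑ b, G b j ^ 2) :=
              Finset.sum_congr rfl fun i _ => Finset.sum_congr rfl fun j _ =>
                (Finset.sum_mul_sum _ _ _ _).symm
          _ = (∑ i, ∑ a, A i a ^ 2) * (∑ j, ∑ b, G b j ^ 2) := by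
              rw [Finset.sum_mul]
              exact Finset.sum_congr rfl fun i _ => (Finset.mul_sum _ _ _).symm
          _ = (∑ i, ∑ a, A i a ^ 2) * (∑ b, ∑ j, G b j ^ 2) := by
              congr 1
              exact Finset.sum_comm
    _ = frobNormSq F * frobNormSq G := by rw [hA, SandwichAux.frob_mul_orth F C hC]
end

section
/- For any matrices G₁, G₂ ∈ ℂ^{m×n}, the Moore–Penrose pseudoinverses satisfy ‖G₁⁺ − G₂⁺‖ ≤ ((1+√5)/2) · max{‖G₁⁺‖², ‖G₂⁺‖²} · ‖G₁ − G₂‖, where ‖·‖ is the spectral norm. -/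
open Matrix

/-- `P` is the Moore–Penrose pseudoinverse of `A` (the four Penrose conditions). -/
def IsMoorePenrose {m n : ℕ} (A : Matrix (Fin m) (Fin n) ℂ) (P : Matrix (Fin n) (Fin m) ℂ) :
    Prop :=
  A * P * A = A ∧ P * A * P = P ∧ (A * P)ᴴ = A * P ∧ (P * A)ᴴ = P * A

/-- The spectral norm (ℓ²-operator norm) of a complex matrix. -/
noncomputable def specNorm {m n : ℕ} (A : Matrix (Fin m) (Fin n) ℂ) : ℝ :=
  ‖LinearMap.toContinuousLinearMap (Matrix.toEuclideanLin A)‖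

open scoped Matrix.Norms.L2Operator InnerProductSpace

noncomputable def wapp {a b : ℕ} (A : Matrix (Fin a) (Fin b) ℂ)
    (x : EuclideanSpace ℂ (Fin b)) : EuclideanSpace ℂ (Fin a) :=
  Matrix.toEuclideanLin A x

lemma wapp_mul {a b c : ℕ} (A : Matrix (Fin a) (Fin b) ℂ) (B : Matrix (Fin b) (Fin c) ℂ)
    (x : EuclideanSpace ℂ (Fin c)) : wapp (A * B) x = wapp A (wapp B x) := by
  simp [wapp, Matrix.toEuclideanLin_apply, Matrix.mulVec_mulVec]

lemma wapp_one {a : ℕ} (x : EuclideanSpace ℂ (Fin a)) : wapp 1 x = x := by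
  simp [wapp, Matrix.toEuclideanLin_apply]

lemma wapp_sub {a b : ℕ} (A B : Matrix (Fin a) (Fin b) ℂ) (x) :
    wapp (A - B) x = wapp A x - wapp B x := by
  simp [wapp, map_sub]

lemma wapp_add {a b : ℕ} (A B : Matrix (Fin a) (Fin b) ℂ) (x) :
    wapp (A + B) x = wapp A x + wapp B x := by
  simp [wapp, map_add]

lemma wapp_neg {a b : ℕ} (A : Matrix (Fin a) (Fin b) ℂ) (x) :
    wapp (-A) x = -wapp A x := by
  simp [wapp, map_neg]

lemma wapp_le {a b : ℕ} (A : Matrix (Fin a) (Fin b) ℂ) (x) :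
    ‖wapp A x‖ ≤ ‖A‖ * ‖x‖ := by
  simpa [wapp, Matrix.toEuclideanLin_apply, EuclideanSpace.equiv] using
    Matrix.l2_opNorm_mulVec A x

lemma wapp_inner {a b : ℕ} (A : Matrix (Fin a) (Fin b) ℂ) (x y) :
    ⟪wapp A x, y⟫_ℂ = ⟪x, wapp Aᴴ y⟫_ℂ := by
  rw [wapp, wapp, Matrix.toEuclideanLin_conjTranspose_eq_adjoint,
    LinearMap.adjoint_inner_right]

lemma proj_pyth {k : ℕ} (Q : Matrix (Fin k) (Fin k) ℂ) (hQ : Q * Q = Q) (hQh : Qᴴ = Q)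
    (x : EuclideanSpace ℂ (Fin k)) :
    ‖wapp Q x‖ ^ 2 + ‖x - wapp Q x‖ ^ 2 = ‖x‖ ^ 2 := by
  have horth : ⟪wapp Q x, x - wapp Q x⟫_ℂ = 0 := by
    rw [inner_sub_right]
    have h1 : ⟪wapp Q x, x⟫_ℂ = ⟪x, wapp Q x⟫_ℂ := by
      rw [wapp_inner, hQh]
    have h2 : ⟪wapp Q x, wapp Q x⟫_ℂ = ⟪x, wapp Q x⟫_ℂ := by
      rw [wapp_inner, hQh, ← wapp_mul, hQ]
    rw [h1, h2, sub_self]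
  have := norm_add_sq_eq_norm_sq_add_norm_sq_of_inner_eq_zero _ _ horth
  rw [add_sub_cancel] at this
  ring_nf
  ring_nf at this
  linarith

lemma proj_contr {k : ℕ} (Q : Matrix (Fin k) (Fin k) ℂ) (hQ : Q * Q = Q) (hQh : Qᴴ = Q)
    (x : EuclideanSpace ℂ (Fin k)) :
    ‖wapp (1 - Q) x‖ ≤ ‖x‖ := by
  rw [wapp_sub, wapp_one]
  have h := proj_pyth Q hQ hQh x
  have h1 : ‖x - wapp Q x‖ ^ 2 ≤ ‖x‖ ^ 2 := by
    have := sq_nonneg ‖wapp Q x‖; linarith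
  exact (pow_le_pow_iff_left₀ (norm_nonneg _) (norm_nonneg _) two_ne_zero).mp h1

lemma specNorm_eq {a b : ℕ} (A : Matrix (Fin a) (Fin b) ℂ) : specNorm A = ‖A‖ := by
  rw [Matrix.l2_opNorm_def]; rfl

lemma scalar_key (a b s : ℝ) (hs : s * s = 5) (hs0 : 0 ≤ s) :
    2 * a ^ 2 + 2 * a * b + b ^ 2 ≤ (3 + s) / 2 * (a ^ 2 + b ^ 2) := by
  have hs1 : 1 ≤ s := by nlinarith
  have key : (s - 1) / 2 * a ^ 2 + (s + 1) / 2 * b ^ 2 - 2 * a * b =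
      (s - 1) / 8 * (2 * a - (s + 1) * b) ^ 2 := by
    linear_combination (a * b / 2 - (s + 1) * b ^ 2 / 8) * hs
  have hK : 0 ≤ (s - 1) / 8 * (2 * a - (s + 1) * b) ^ 2 :=
    mul_nonneg (by linarith) (sq_nonneg _)
  linarith [key, hK]

set_option maxHeartbeats 1000000

/-- Wedin / Stewart 1977, Theorem 3.3.  For any matrices
`G₁, G₂ ∈ ℂ^{m×n}` the Moore–Penrose pseudoinverses satisfy
`‖G₁⁺ − G₂⁺‖ ≤ ((1+√5)/2) · max{‖G₁⁺‖², ‖G₂⁺‖²} · ‖G₁ − G₂‖` in the spectral norm. -/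
theorem pinv_perturbation_general
    {m n : ℕ} (G₁ G₂ : Matrix (Fin m) (Fin n) ℂ)
    (P₁ P₂ : Matrix (Fin n) (Fin m) ℂ)
    (hP₁ : IsMoorePenrose G₁ P₁) (hP₂ : IsMoorePenrose G₂ P₂) :
    specNorm (P₁ - P₂) ≤
      (1 + Real.sqrt 5) / 2 * max (specNorm P₁ ^ 2) (specNorm P₂ ^ 2) *
        specNorm (G₁ - G₂) := by
  obtain ⟨h11, h12, h13, h14⟩ := hP₁
  obtain ⟨h21, h22, h23, h24⟩ := hP₂
  set E : Matrix (Fin m) (Fin n) ℂ := G₁ - G₂ with hE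
  have hEH : Eᴴ = G₁ᴴ - G₂ᴴ := by rw [hE, conjTranspose_sub]
  -- auxiliary matrix identities
  have s1 : G₁ᴴ * (G₁ * P₁) = G₁ᴴ := by
    calc G₁ᴴ * (G₁ * P₁) = G₁ᴴ * (G₁ * P₁)ᴴ := by rw [h13]
    _ = (G₁ * P₁ * G₁)ᴴ := by rw [← conjTranspose_mul]
    _ = G₁ᴴ := by rw [h11]
  have s2 : G₁ᴴ * P₁ᴴ * P₁ = P₁ := by
    have h : G₁ᴴ * P₁ᴴ = P₁ * G₁ := by rw [← conjTranspose_mul, h14]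
    rw [h, h12]
  have s3 : P₂ * P₂ᴴ * G₂ᴴ = P₂ := by
    have h : P₂ᴴ * G₂ᴴ = G₂ * P₂ := by rw [← conjTranspose_mul, h23]
    rw [Matrix.mul_assoc, h, ← Matrix.mul_assoc, h22]
  have s4 : P₂ * G₂ * G₂ᴴ = G₂ᴴ := by
    calc P₂ * G₂ * G₂ᴴ = (P₂ * G₂)ᴴ * G₂ᴴ := by rw [h24]
    _ = (G₂ * (P₂ * G₂))ᴴ := by rw [← conjTranspose_mul]
    _ = G₂ᴴ := by rw [← Matrix.mul_assoc, h21]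
  have s5 : P₂ᴴ * (P₂ * G₂) = P₂ᴴ := by
    calc P₂ᴴ * (P₂ * G₂) = P₂ᴴ * (P₂ * G₂)ᴴ := by rw [h24]
    _ = (P₂ * G₂ * P₂)ᴴ := by rw [← conjTranspose_mul]
    _ = P₂ᴴ := by rw [h22]
  -- decomposition P₁ - P₂ = M₁ + M₂ + M₃
  have eM1 : -(P₂ * E * P₁) = P₂ * (G₂ * P₁) - P₂ * (G₁ * P₁) := by
    rw [hE]
    simp only [Matrix.sub_mul, Matrix.mul_sub, Matrix.mul_assoc]
    abel
  have eM2 : (P₂ * P₂ᴴ * Eᴴ) * (1 - G₁ * P₁) = P₂ * (G₁ * P₁) - P₂ := by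
    have hX : P₂ * P₂ᴴ * Eᴴ = P₂ * P₂ᴴ * G₁ᴴ - P₂ := by
      rw [hEH, Matrix.mul_sub, s3]
    have s1' : P₂ * P₂ᴴ * G₁ᴴ * (G₁ * P₁) = P₂ * P₂ᴴ * G₁ᴴ := by
      rw [Matrix.mul_assoc (P₂ * P₂ᴴ), s1]
    rw [hX, Matrix.sub_mul, Matrix.mul_sub, Matrix.mul_sub, Matrix.mul_one, Matrix.mul_one, s1']
    abel
  have eM3 : (1 - P₂ * G₂) * (Eᴴ * (P₁ᴴ * P₁)) = P₁ - P₂ * (G₂ * P₁) := by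
    have hY : Eᴴ * (P₁ᴴ * P₁) = P₁ - G₂ᴴ * (P₁ᴴ * P₁) := by
      rw [hEH, Matrix.sub_mul]
      congr 1
      rw [← Matrix.mul_assoc, s2]
    have s4' : P₂ * G₂ * (G₂ᴴ * (P₁ᴴ * P₁)) = G₂ᴴ * (P₁ᴴ * P₁) := by
      rw [← Matrix.mul_assoc, s4]
    rw [hY, Matrix.sub_mul, Matrix.one_mul, Matrix.mul_sub, s4', Matrix.mul_assoc]
    abel
  have decomp : P₁ - P₂ =
      -(P₂ * E * P₁) + (P₂ * P₂ᴴ * Eᴴ) * (1 - G₁ * P₁) + (1 - P₂ * G₂) * (Eᴴ * (P₁ᴴ * P₁)) := by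
    rw [eM1, eM2, eM3]; abel
  -- projections
  have hQ1 : (G₁ * P₁) * (G₁ * P₁) = G₁ * P₁ := by rw [← Matrix.mul_assoc, h11]
  have hQ2 : (P₂ * G₂) * (P₂ * G₂) = P₂ * G₂ := by rw [← Matrix.mul_assoc, h22]
  -- constants
  set s : ℝ := Real.sqrt 5 with hs
  have hs5 : s * s = 5 := Real.mul_self_sqrt (by norm_num)
  have hs0 : (0:ℝ) ≤ s := Real.sqrt_nonneg 5
  set N : ℝ := max (‖P₁‖ ^ 2) (‖P₂‖ ^ 2) with hN
  have hN0 : 0 ≤ N := le_trans (sq_nonneg ‖P₁‖) (le_max_left _ _)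
  have hp12 : ‖P₂‖ * ‖P₁‖ ≤ N := by
    rcases le_total ‖P₁‖ ‖P₂‖ with h | h
    · calc ‖P₂‖ * ‖P₁‖ ≤ ‖P₂‖ * ‖P₂‖ := mul_le_mul_of_nonneg_left h (norm_nonneg _)
      _ = ‖P₂‖ ^ 2 := (sq ‖P₂‖).symm
      _ ≤ N := le_max_right _ _
    · calc ‖P₂‖ * ‖P₁‖ ≤ ‖P₁‖ * ‖P₁‖ := mul_le_mul_of_nonneg_right h (norm_nonneg _)
      _ = ‖P₁‖ ^ 2 := (sq ‖P₁‖).symm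
      _ ≤ N := le_max_left _ _
  have hE0 : (0:ℝ) ≤ ‖E‖ := norm_nonneg _
  set β : ℝ := N * ‖E‖ with hβ
  have hβ0 : 0 ≤ β := mul_nonneg hN0 hE0
  -- the vector bound
  have key : ∀ x : EuclideanSpace ℂ (Fin m),
      ‖wapp (P₁ - P₂) x‖ ≤ ((1 + s) / 2 * β) * ‖x‖ := by
    intro x
    set u : EuclideanSpace ℂ (Fin m) := wapp (G₁ * P₁) x with hu
    set v : EuclideanSpace ℂ (Fin m) := x - u with hv
    have huv : ‖u‖ ^ 2 + ‖v‖ ^ 2 = ‖x‖ ^ 2 := proj_pyth _ hQ1 h13 x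
    set w₁ : EuclideanSpace ℂ (Fin n) := wapp P₂ (wapp E (wapp P₁ u)) with hw₁
    set w₂ : EuclideanSpace ℂ (Fin n) := wapp P₂ (wapp P₂ᴴ (wapp Eᴴ v)) with hw₂
    set c : EuclideanSpace ℂ (Fin n) := wapp Eᴴ (wapp P₁ᴴ (wapp P₁ u)) with hc
    set w₃ : EuclideanSpace ℂ (Fin n) := wapp (1 - P₂ * G₂) c with hw₃
    -- identify the decomposition at the vector level
    have happ1 : wapp (-(P₂ * E * P₁)) x = -w₁ := by
      have hP₁u : wapp P₁ x = wapp P₁ u := by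
        conv_lhs => rw [show P₁ = P₁ * (G₁ * P₁) by rw [← Matrix.mul_assoc, h12]]
        rw [wapp_mul]
      rw [wapp_neg, wapp_mul, wapp_mul, hP₁u, hw₁]
    have happ2 : wapp ((P₂ * P₂ᴴ * Eᴴ) * (1 - G₁ * P₁)) x = w₂ := by
      have h0 : wapp (1 - G₁ * P₁) x = v := by rw [wapp_sub, wapp_one, hv, hu]
      rw [wapp_mul, h0, wapp_mul, wapp_mul, hw₂]
    have happ3 : wapp ((1 - P₂ * G₂) * (Eᴴ * (P₁ᴴ * P₁))) x = w₃ := by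
      have hPPm : (P₁ᴴ * P₁) * (G₁ * P₁) = P₁ᴴ * P₁ := by
        rw [Matrix.mul_assoc P₁ᴴ, ← Matrix.mul_assoc P₁ G₁ P₁, h12]
      have hPP : wapp (P₁ᴴ * P₁) x = wapp P₁ᴴ (wapp P₁ u) := by
        rw [← hPPm, wapp_mul, ← hu, wapp_mul]
      rw [wapp_mul, wapp_mul, hPP, hw₃, hc]
    have hdec : wapp (P₁ - P₂) x = (-w₁ + w₂) + w₃ := by
      rw [decomp, wapp_add, wapp_add, happ1, happ2, happ3]
    -- orthogonality
    have horth : ⟪-w₁ + w₂, w₃⟫_ℂ = 0 := by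
      have hgen : ∀ z : EuclideanSpace ℂ (Fin m), ⟪wapp P₂ z, w₃⟫_ℂ = 0 := by
        intro z
        rw [hw₃, wapp_inner, ← wapp_mul]
        have h0 : P₂ᴴ * (1 - P₂ * G₂) = 0 := by
          rw [Matrix.mul_sub, Matrix.mul_one, s5, sub_self]
        rw [h0]
        simp [wapp]
      rw [inner_add_left, inner_neg_left, hgen, hgen, neg_zero, zero_add]
    have hpyth : ‖wapp (P₁ - P₂) x‖ ^ 2 = ‖-w₁ + w₂‖ ^ 2 + ‖w₃‖ ^ 2 := by
      have h0 := norm_add_sq_eq_norm_sq_add_norm_sq_of_inner_eq_zero _ _ horth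
      rw [hdec]
      ring_nf; ring_nf at h0; linarith
    -- norm bounds
    have hb1 : ‖w₁‖ ≤ β * ‖u‖ := by
      calc ‖w₁‖ ≤ ‖P₂‖ * ‖wapp E (wapp P₁ u)‖ := wapp_le _ _
      _ ≤ ‖P₂‖ * (‖E‖ * ‖wapp P₁ u‖) :=
          mul_le_mul_of_nonneg_left (wapp_le _ _) (norm_nonneg _)
      _ ≤ ‖P₂‖ * (‖E‖ * (‖P₁‖ * ‖u‖)) :=
          mul_le_mul_of_nonneg_left
            (mul_le_mul_of_nonneg_left (wapp_le _ _) (norm_nonneg _)) (norm_nonneg _)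
      _ = (‖P₂‖ * ‖P₁‖) * ‖E‖ * ‖u‖ := by ring
      _ ≤ β * ‖u‖ := by
          rw [hβ]
          exact mul_le_mul_of_nonneg_right (mul_le_mul_of_nonneg_right hp12 hE0) (norm_nonneg _)
    have hb2 : ‖w₂‖ ≤ β * ‖v‖ := by
      have hcc : ‖P₂ᴴ‖ = ‖P₂‖ := Matrix.l2_opNorm_conjTranspose P₂
      have hee : ‖Eᴴ‖ = ‖E‖ := Matrix.l2_opNorm_conjTranspose E
      calc ‖w₂‖ ≤ ‖P₂‖ * ‖wapp P₂ᴴ (wapp Eᴴ v)‖ := wapp_le _ _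
      _ ≤ ‖P₂‖ * (‖P₂ᴴ‖ * ‖wapp Eᴴ v‖) :=
          mul_le_mul_of_nonneg_left (wapp_le _ _) (norm_nonneg _)
      _ ≤ ‖P₂‖ * (‖P₂ᴴ‖ * (‖Eᴴ‖ * ‖v‖)) :=
          mul_le_mul_of_nonneg_left
            (mul_le_mul_of_nonneg_left (wapp_le _ _) (norm_nonneg _)) (norm_nonneg _)
      _ = (‖P₂‖ * ‖P₂‖) * ‖E‖ * ‖v‖ := by rw [hcc, hee]; ring
      _ ≤ β * ‖v‖ := by
          rw [hβ]
          have hp22 : ‖P₂‖ * ‖P₂‖ ≤ N := by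
            calc ‖P₂‖ * ‖P₂‖ = ‖P₂‖ ^ 2 := (sq ‖P₂‖).symm
            _ ≤ N := le_max_right _ _
          exact mul_le_mul_of_nonneg_right (mul_le_mul_of_nonneg_right hp22 hE0) (norm_nonneg _)
    have hb3 : ‖w₃‖ ≤ β * ‖u‖ := by
      have hee : ‖Eᴴ‖ = ‖E‖ := Matrix.l2_opNorm_conjTranspose E
      have hpp : ‖P₁ᴴ‖ = ‖P₁‖ := Matrix.l2_opNorm_conjTranspose P₁
      have hcn : ‖c‖ ≤ β * ‖u‖ := by
        calc ‖c‖ ≤ ‖Eᴴ‖ * ‖wapp P₁ᴴ (wapp P₁ u)‖ := wapp_le _ _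
        _ ≤ ‖Eᴴ‖ * (‖P₁ᴴ‖ * ‖wapp P₁ u‖) :=
            mul_le_mul_of_nonneg_left (wapp_le _ _) (norm_nonneg _)
        _ ≤ ‖Eᴴ‖ * (‖P₁ᴴ‖ * (‖P₁‖ * ‖u‖)) :=
            mul_le_mul_of_nonneg_left
              (mul_le_mul_of_nonneg_left (wapp_le _ _) (norm_nonneg _)) (norm_nonneg _)
        _ = (‖P₁‖ * ‖P₁‖) * ‖E‖ * ‖u‖ := by rw [hee, hpp]; ring
        _ ≤ β * ‖u‖ := by
            rw [hβ]
            have hp11 : ‖P₁‖ * ‖P₁‖ ≤ N := by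
              calc ‖P₁‖ * ‖P₁‖ = ‖P₁‖ ^ 2 := (sq ‖P₁‖).symm
              _ ≤ N := le_max_left _ _
            exact mul_le_mul_of_nonneg_right (mul_le_mul_of_nonneg_right hp11 hE0) (norm_nonneg _)
      exact le_trans (proj_contr _ hQ2 h24 c) hcn
    -- assemble
    have h12' : ‖-w₁ + w₂‖ ≤ β * ‖u‖ + β * ‖v‖ := by
      calc ‖-w₁ + w₂‖ ≤ ‖-w₁‖ + ‖w₂‖ := norm_add_le _ _
      _ = ‖w₁‖ + ‖w₂‖ := by rw [norm_neg]
      _ ≤ β * ‖u‖ + β * ‖v‖ := add_le_add hb1 hb2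
    have hu0 : (0:ℝ) ≤ ‖u‖ := norm_nonneg _
    have hv0 : (0:ℝ) ≤ ‖v‖ := norm_nonneg _
    have hsq : ‖wapp (P₁ - P₂) x‖ ^ 2 ≤ ((1 + s) / 2 * β * ‖x‖) ^ 2 := by
      have h1 : ‖-w₁ + w₂‖ ^ 2 ≤ (β * ‖u‖ + β * ‖v‖) ^ 2 :=
        pow_le_pow_left₀ (norm_nonneg _) h12' 2
      have h2 : ‖w₃‖ ^ 2 ≤ (β * ‖u‖) ^ 2 :=
        pow_le_pow_left₀ (norm_nonneg _) hb3 2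
      have h3 := scalar_key ‖u‖ ‖v‖ s hs5 hs0
      calc ‖wapp (P₁ - P₂) x‖ ^ 2 = ‖-w₁ + w₂‖ ^ 2 + ‖w₃‖ ^ 2 := hpyth
      _ ≤ (β * ‖u‖ + β * ‖v‖) ^ 2 + (β * ‖u‖) ^ 2 := add_le_add h1 h2
      _ = β ^ 2 * (2 * ‖u‖ ^ 2 + 2 * ‖u‖ * ‖v‖ + ‖v‖ ^ 2) := by ring
      _ ≤ β ^ 2 * ((3 + s) / 2 * (‖u‖ ^ 2 + ‖v‖ ^ 2)) :=
          mul_le_mul_of_nonneg_left h3 (sq_nonneg β)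
      _ = ((1 + s) / 2 * β) ^ 2 * (‖u‖ ^ 2 + ‖v‖ ^ 2) := by
          linear_combination (-(‖u‖ ^ 2 + ‖v‖ ^ 2) * β ^ 2 / 4) * hs5
      _ = ((1 + s) / 2 * β) ^ 2 * ‖x‖ ^ 2 := by rw [huv]
      _ = ((1 + s) / 2 * β * ‖x‖) ^ 2 := by ring
    have hrhs0 : 0 ≤ (1 + s) / 2 * β * ‖x‖ := by positivity
    exact (pow_le_pow_iff_left₀ (norm_nonneg _) hrhs0 two_ne_zero).mp hsq
  -- conclude
  simp only [specNorm_eq]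
  have hfin : ‖P₁ - P₂‖ ≤ (1 + s) / 2 * β := by
    rw [Matrix.l2_opNorm_def]
    refine ContinuousLinearMap.opNorm_le_bound _ (by positivity) fun x => ?_
    exact key x
  calc ‖P₁ - P₂‖ ≤ (1 + s) / 2 * β := hfin
  _ = (1 + Real.sqrt 5) / 2 * max (‖P₁‖ ^ 2) (‖P₂‖ ^ 2) * ‖G₁ - G₂‖ := by
      rw [hβ, hN, hs, hE]; ring
end

section
/- Let G₁, G₂ ∈ ℂ^{m×n} with rank(G₁) = rank(G₂) < min{m,n}. Then ‖G₂⁺ − G₁⁺‖ ≤ ((1+√5)/2) · ‖G₂⁺‖ · ‖G₁⁺‖ · ‖G₂ − G₁‖ in the spectral norm. -/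
open Matrix

/-!
Write `Qᵢ = Gᵢ Pᵢ` and `Rᵢ = Pᵢ Gᵢ` for the orthogonal projections onto `range Gᵢ` and
`range Pᵢ`. Then
`P₂ - P₁ = P₂ (G₁ - G₂) P₁ · Q₁ + P₂ Q₂ (1 - Q₁) · (1 - Q₁) + (R₂ - 1) R₁ P₁ · Q₁`,
where the last operator maps into `(range P₂)ᗮ` and the first two into `range P₂`. Each of the
three has norm at most `β = ‖P₂‖ ‖P₁‖ ‖G₂ - G₁‖`: the first by submultiplicativity, the other two
because `‖(1 - Q₁) Q₂‖ ≤ ‖(1 - Q₂) Q₁‖` for orthogonal projections of equal rank (similarly for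
`R`), and `(1 - Q₂) Q₁ = (1 - Q₂)(G₁ - G₂) P₁`. Splitting `x = a + b` with `a = Q₁ x` gives
`‖(P₂ - P₁) x‖² ≤ β² ((‖a‖ + ‖b‖)² + ‖a‖²) ≤ φ² β² ‖x‖²`, since `φ²` is the largest eigenvalue
of `!![2, 1; 1, 1]`.
-/

open ContinuousLinearMap Module
open scoped InnerProductSpace goldenRatio

lemma sq_add_add_sq_le_goldenRatio_sq_mul (a b : ℝ) :
    (a + b) ^ 2 + a ^ 2 ≤ φ ^ 2 * (a ^ 2 + b ^ 2) := by
  have hsos : φ ^ 2 * (a ^ 2 + b ^ 2) - ((a + b) ^ 2 + a ^ 2) = (φ - 1) * (a - φ * b) ^ 2 := by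
    linear_combination (a ^ 2 + 2 * a * b - (φ - 1) * b ^ 2) * Real.goldenRatio_sq
  nlinarith [mul_nonneg (sub_nonneg.2 Real.one_lt_goldenRatio.le) (sq_nonneg (a - φ * b))]

lemma IsSelfAdjoint.norm_mul_comm {R : Type*} [NonUnitalNormedRing R] [StarRing R]
    [NormedStarGroup R] {a b : R} (ha : IsSelfAdjoint a) (hb : IsSelfAdjoint b) :
    ‖a * b‖ = ‖b * a‖ := by
  rw [← norm_star, star_mul, ha.star_eq, hb.star_eq]

variable {𝕜 E F : Type*} [RCLike 𝕜]
  [NormedAddCommGroup E] [InnerProductSpace 𝕜 E] [NormedAddCommGroup F] [InnerProductSpace 𝕜 F]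

namespace IsStarProjection

variable [CompleteSpace E] {p q : E →L[𝕜] E}

lemma apply_apply (hp : IsStarProjection p) (x : E) : p (p x) = p x :=
  congr($hp.isIdempotentElem.eq x)

lemma inner_apply_comm (hp : IsStarProjection p) (x y : E) : ⟪p x, y⟫_𝕜 = ⟪x, p y⟫_𝕜 :=
  hp.isSelfAdjoint.isSymmetric x y

lemma inner_apply_sub_apply (hp : IsStarProjection p) (x y : E) : ⟪p x, y - p y⟫_𝕜 = 0 := by
  rw [hp.inner_apply_comm, map_sub, hp.apply_apply, sub_self, inner_zero_right]

lemma norm_sq_apply_add_norm_sq_sub_apply (hp : IsStarProjection p) (x : E) :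
    ‖p x‖ ^ 2 + ‖x - p x‖ ^ 2 = ‖x‖ ^ 2 := by
  have := norm_add_sq_eq_norm_sq_add_norm_sq_of_inner_eq_zero _ _ (hp.inner_apply_sub_apply x x)
  rw [add_sub_cancel] at this
  simp only [sq, this]

lemma norm_apply_le (hp : IsStarProjection p) (x : E) : ‖p x‖ ≤ ‖x‖ :=
  (p.le_opNorm x).trans (mul_le_of_le_one_left (norm_nonneg x) (hp.norm_le p))

lemma norm_sub_apply_le_of_apply_eq (hp : IsStarProjection p) (hq : IsStarProjection q)
    {u : E} (hu : p u = u) {δ : ℝ} (huq : ‖u - q u‖ ≤ δ * ‖u‖) :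
    ‖q u - p (q u)‖ ≤ δ * ‖q u‖ := by
  set v := q u
  have hpv := hp.norm_sq_apply_add_norm_sq_sub_apply v
  have hqu := hq.norm_sq_apply_add_norm_sq_sub_apply u
  -- `‖v‖² = ⟪u, v⟫ = ⟪u, p v⟫` since `q` and `p` fix `v` and `u`
  have hv : ‖v‖ ^ 2 ≤ ‖u‖ * ‖p v‖ := by
    have : (‖v‖ ^ 2 : 𝕜) = ⟪u, p v⟫_𝕜 := by
      rw [← inner_self_eq_norm_sq_to_K, ← hp.inner_apply_comm, hu, hq.inner_apply_comm,
        hq.apply_apply]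
    simpa [← this] using norm_inner_le_norm (𝕜 := 𝕜) u (p v)
  have key : ‖v - p v‖ * ‖u‖ ≤ ‖v‖ * ‖u - v‖ := by
    refine (pow_le_pow_iff_left₀ (by positivity) (by positivity) two_ne_zero).1 ?_
    nlinarith [mul_le_mul hv hv (sq_nonneg _) (by positivity)]
  rcases (norm_nonneg u).eq_or_lt with hu0 | hu0
  · simp [v, norm_eq_zero.1 hu0.symm]
  · refine le_of_mul_le_mul_right ?_ hu0
    calc ‖v - p v‖ * ‖u‖ ≤ ‖v‖ * ‖u - v‖ := key
      _ ≤ ‖v‖ * (δ * ‖u‖) := by gcongr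
      _ = δ * ‖v‖ * ‖u‖ := by ring

/-- If `δ = ‖(1 - q) * p‖ < 1`, then `q` is injective on `range p`, hence maps it onto `range q`
by the rank condition, and `norm_sub_apply_le_of_apply_eq` bounds `1 - p` on `range q` by `δ`. -/
lemma norm_one_sub_mul_le [FiniteDimensional 𝕜 E] (hp : IsStarProjection p)
    (hq : IsStarProjection q) (hpq : finrank 𝕜 p.range = finrank 𝕜 q.range) :
    ‖(1 - p) * q‖ ≤ ‖(1 - q) * p‖ := by
  set δ := ‖(1 - q) * p‖
  have hδ : 0 ≤ δ := norm_nonneg _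
  rcases le_or_gt 1 δ with hδ1 | hδ1
  · calc ‖(1 - p) * q‖ ≤ ‖1 - p‖ * ‖q‖ := norm_mul_le _ _
      _ ≤ 1 * 1 := by gcongr <;> [exact hp.one_sub.norm_le _; exact hq.norm_le _]
      _ ≤ δ := by rwa [one_mul]
  have hmove : ∀ u ∈ p.range, p u = u ∧ ‖u - q u‖ ≤ δ * ‖u‖ := by
    rintro _ ⟨w, rfl⟩
    refine ⟨hp.apply_apply w, ?_⟩
    simpa [hp.apply_apply] using ((1 - q) * p).le_opNorm (p w)
  have hmap : p.range.map (q : E →ₗ[𝕜] E) = q.range := by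
    refine Submodule.eq_of_le_of_finrank_eq (LinearMap.map_le_range) ?_
    rw [← LinearMap.range_domRestrict, LinearMap.finrank_range_of_inj, hpq]
    rw [← LinearMap.ker_eq_bot, LinearMap.ker_eq_bot']
    rintro ⟨u, hu⟩ hqu
    have hqu : q u = 0 := hqu
    have := (hmove u hu).2
    rw [hqu, sub_zero] at this
    exact Subtype.ext (norm_le_zero_iff.1 (by nlinarith [norm_nonneg u]))
  refine opNorm_le_bound _ hδ fun x => ?_
  obtain ⟨u, hu, hux⟩ : q x ∈ p.range.map (q : E →ₗ[𝕜] E) := hmap ▸ ⟨x, rfl⟩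
  replace hux : q u = q x := hux
  obtain ⟨hpu, huq⟩ := hmove u hu
  calc ‖((1 - p) * q) x‖ = ‖q u - p (q u)‖ := by simp [hux]
    _ ≤ δ * ‖q x‖ := hux ▸ norm_sub_apply_le_of_apply_eq hp hq hpu huq
    _ ≤ δ * ‖x‖ := mul_le_mul_of_nonneg_left (hq.norm_apply_le x) hδ

end IsStarProjection

lemma norm_comp_add_comp_add_comp_le [CompleteSpace F] {Q : F →L[𝕜] F} {A B C : F →L[𝕜] E}
    {β : ℝ} (hQ : IsStarProjection Q) (hAC : ∀ x y, ⟪A x, C y⟫_𝕜 = 0)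
    (hBC : ∀ x y, ⟪B x, C y⟫_𝕜 = 0) (hA : ‖A‖ ≤ β) (hB : ‖B‖ ≤ β) (hC : ‖C‖ ≤ β) :
    ‖A ∘L Q + B ∘L (1 - Q) + C ∘L Q‖ ≤ φ * β := by
  have hβ : 0 ≤ β := (norm_nonneg A).trans hA
  refine opNorm_le_bound _ (by positivity) fun x => ?_
  set a := Q x
  set b := x - Q x
  have hAB : ‖A a + B b‖ ≤ β * ‖a‖ + β * ‖b‖ :=
    (norm_add_le _ _).trans (add_le_add (A.le_of_opNorm_le hA a) (B.le_of_opNorm_le hB b))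
  have hC' : ‖C a‖ ≤ β * ‖a‖ := C.le_of_opNorm_le hC a
  have hpyth : ‖A a + B b + C a‖ ^ 2 = ‖A a + B b‖ ^ 2 + ‖C a‖ ^ 2 := by
    simpa only [sq] using norm_add_sq_eq_norm_sq_add_norm_sq_of_inner_eq_zero (𝕜 := 𝕜) _ _
      (by rw [inner_add_left, hAC, hBC, add_zero])
  have hsq : ‖A a + B b + C a‖ ^ 2 ≤ (φ * β * ‖x‖) ^ 2 := calc
    _ ≤ (β * ‖a‖ + β * ‖b‖) ^ 2 + (β * ‖a‖) ^ 2 := by rw [hpyth]; gcongr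
    _ = β ^ 2 * ((‖a‖ + ‖b‖) ^ 2 + ‖a‖ ^ 2) := by ring
    _ ≤ β ^ 2 * (φ ^ 2 * (‖a‖ ^ 2 + ‖b‖ ^ 2)) := by
      gcongr; exact sq_add_add_sq_le_goldenRatio_sq_mul _ _
    _ = (φ * β * ‖x‖) ^ 2 := by rw [hQ.norm_sq_apply_add_norm_sq_sub_apply]; ring
  have happly : (A ∘L Q + B ∘L (1 - Q) + C ∘L Q : F →L[𝕜] E) x = A a + B b + C a := by simp [a, b]
  rw [happly]
  exact (pow_le_pow_iff_left₀ (norm_nonneg _) (by positivity) two_ne_zero).1 hsq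

namespace ContinuousLinearMap

structure IsMoorePenroseInverse [CompleteSpace E] [CompleteSpace F] (G : E →L[𝕜] F)
    (P : F →L[𝕜] E) : Prop where
  comp_inv_comp : G ∘L P ∘L G = G
  inv_comp_inv : P ∘L G ∘L P = P
  isSelfAdjoint_comp_inv : IsSelfAdjoint (G ∘L P)
  isSelfAdjoint_inv_comp : IsSelfAdjoint (P ∘L G)

namespace IsMoorePenroseInverse

variable [CompleteSpace E] [CompleteSpace F] {G : E →L[𝕜] F} {P : F →L[𝕜] E}

lemma symm (h : IsMoorePenroseInverse G P) : IsMoorePenroseInverse P G :=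
  ⟨h.inv_comp_inv, h.comp_inv_comp, h.isSelfAdjoint_inv_comp, h.isSelfAdjoint_comp_inv⟩

lemma apply_inv_apply (h : IsMoorePenroseInverse G P) (x : E) : G (P (G x)) = G x :=
  congr($h.comp_inv_comp x)

lemma isStarProjection_comp_inv (h : IsMoorePenroseInverse G P) :
    IsStarProjection (G ∘L P) :=
  ⟨by ext x; simp [h.apply_inv_apply], h.isSelfAdjoint_comp_inv⟩

lemma range_comp_inv (h : IsMoorePenroseInverse G P) : (G ∘L P).range = G.range :=
  le_antisymm (LinearMap.range_comp_le_range _ _) fun _ ⟨x, hx⟩ =>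
    ⟨G x, by simp [h.apply_inv_apply, ← hx]⟩

lemma finrank_range_le [FiniteDimensional 𝕜 E] (h : IsMoorePenroseInverse G P) :
    finrank 𝕜 G.range ≤ finrank 𝕜 P.range := by
  rw [← h.range_comp_inv, toLinearMap_comp, LinearMap.range_comp]
  exact Submodule.finrank_map_le _ _

lemma finrank_range_inv [FiniteDimensional 𝕜 E] [FiniteDimensional 𝕜 F]
    (h : IsMoorePenroseInverse G P) : finrank 𝕜 P.range = finrank 𝕜 G.range :=
  le_antisymm h.symm.finrank_range_le h.finrank_range_le

lemma inner_inv_apply_sub (h : IsMoorePenroseInverse G P) (x : F) (y : E) :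
    ⟪P x, P (G y) - y⟫_𝕜 = 0 := by
  have hPx : P x = (P ∘L G) (P x) := (h.symm.apply_inv_apply x).symm
  rw [← neg_sub, inner_neg_right, hPx]
  exact neg_eq_zero.2 (h.symm.isStarProjection_comp_inv.inner_apply_sub_apply (P x) y)

lemma norm_one_sub_comp_inv_mul_le (h : IsMoorePenroseInverse G P) (X : E →L[𝕜] F)
    (Y : F →L[𝕜] E) : ‖(1 - G ∘L P) * (X ∘L Y)‖ ≤ ‖G - X‖ * ‖Y‖ := by
  have hsplit : (1 - G ∘L P) * (X ∘L Y) = (1 - G ∘L P) ∘L ((X - G) ∘L Y) := by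
    ext x; simp [h.apply_inv_apply]
  calc ‖(1 - G ∘L P) * (X ∘L Y)‖ ≤ ‖1 - G ∘L P‖ * (‖X - G‖ * ‖Y‖) := by
        rw [hsplit]; exact (opNorm_comp_le _ _).trans (by gcongr; exact opNorm_comp_le _ _)
    _ ≤ 1 * (‖X - G‖ * ‖Y‖) := by gcongr; exact h.isStarProjection_comp_inv.one_sub.norm_le _
    _ = ‖G - X‖ * ‖Y‖ := by rw [one_mul, norm_sub_rev]

lemma norm_mul_one_sub_inv_comp_le (h : IsMoorePenroseInverse G P) (X : E →L[𝕜] F)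
    (Y : F →L[𝕜] E) : ‖(Y ∘L X) * (1 - P ∘L G)‖ ≤ ‖Y‖ * ‖X - G‖ := by
  have hsplit : (Y ∘L X) * (1 - P ∘L G) = Y ∘L ((X - G) ∘L (1 - P ∘L G)) := by
    ext x; simp [h.apply_inv_apply]
  calc ‖(Y ∘L X) * (1 - P ∘L G)‖ ≤ ‖Y‖ * (‖X - G‖ * ‖1 - P ∘L G‖) := by
        rw [hsplit]; exact (opNorm_comp_le _ _).trans (by gcongr; exact opNorm_comp_le _ _)
    _ ≤ ‖Y‖ * (‖X - G‖ * 1) := by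
        gcongr; exact h.symm.isStarProjection_comp_inv.one_sub.norm_le _
    _ = ‖Y‖ * ‖X - G‖ := by rw [mul_one]

variable [FiniteDimensional 𝕜 F] {G₁ G₂ : E →L[𝕜] F} {P₁ P₂ : F →L[𝕜] E}

lemma norm_comp_inv_mul_one_sub_comp_inv_le (h₁ : IsMoorePenroseInverse G₁ P₁)
    (h₂ : IsMoorePenroseInverse G₂ P₂) (hrank : finrank 𝕜 G₁.range = finrank 𝕜 G₂.range) :
    ‖(G₂ ∘L P₂) * (1 - G₁ ∘L P₁)‖ ≤ ‖G₂ - G₁‖ * ‖P₁‖ := by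
  have hQ₁ := h₁.isStarProjection_comp_inv
  have hQ₂ := h₂.isStarProjection_comp_inv
  rw [hQ₂.isSelfAdjoint.norm_mul_comm hQ₁.one_sub.isSelfAdjoint]
  refine (hQ₁.norm_one_sub_mul_le hQ₂ ?_).trans (h₂.norm_one_sub_comp_inv_mul_le G₁ P₁)
  rw [h₁.range_comp_inv, h₂.range_comp_inv, hrank]

variable [FiniteDimensional 𝕜 E]

lemma norm_inv_comp_sub_one_mul_inv_comp_le (h₁ : IsMoorePenroseInverse G₁ P₁)
    (h₂ : IsMoorePenroseInverse G₂ P₂) (hrank : finrank 𝕜 G₁.range = finrank 𝕜 G₂.range) :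
    ‖(P₂ ∘L G₂ - 1) * (P₁ ∘L G₁)‖ ≤ ‖P₂‖ * ‖G₂ - G₁‖ := by
  have hR₁ := h₁.symm.isStarProjection_comp_inv
  have hR₂ := h₂.symm.isStarProjection_comp_inv
  rw [← neg_sub, neg_mul, norm_neg]
  refine (hR₂.norm_one_sub_mul_le hR₁ ?_).trans ?_
  · rw [h₂.symm.range_comp_inv, h₁.symm.range_comp_inv, h₂.finrank_range_inv,
      h₁.finrank_range_inv, hrank]
  · rw [hR₁.one_sub.isSelfAdjoint.norm_mul_comm hR₂.isSelfAdjoint]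
    exact h₁.norm_mul_one_sub_inv_comp_le G₂ P₂

theorem norm_inv_sub_inv_le (h₁ : IsMoorePenroseInverse G₁ P₁)
    (h₂ : IsMoorePenroseInverse G₂ P₂) (hrank : finrank 𝕜 G₁.range = finrank 𝕜 G₂.range) :
    ‖P₂ - P₁‖ ≤ φ * ‖P₂‖ * ‖P₁‖ * ‖G₂ - G₁‖ := by
  set Q₁ := G₁ ∘L P₁
  set Q₂ := G₂ ∘L P₂
  set R₁ := P₁ ∘L G₁
  set R₂ := P₂ ∘L G₂
  have hdecomp : P₂ - P₁ = (P₂ ∘L ((G₁ - G₂) ∘L P₁)) ∘L Q₁ + (P₂ ∘L (Q₂ * (1 - Q₁))) ∘L (1 - Q₁)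
      + (((R₂ - 1) * R₁) ∘L P₁) ∘L Q₁ := by
    ext x; simp [Q₁, Q₂, R₁, R₂, h₁.symm.apply_inv_apply, h₂.symm.apply_inv_apply]
  rw [hdecomp, show φ * ‖P₂‖ * ‖P₁‖ * ‖G₂ - G₁‖ = φ * (‖P₂‖ * (‖G₂ - G₁‖ * ‖P₁‖)) by ring]
  refine norm_comp_add_comp_add_comp_le h₁.isStarProjection_comp_inv
    (fun x y => h₂.inner_inv_apply_sub _ _) (fun x y => h₂.inner_inv_apply_sub _ _) ?_ ?_ ?_
  · calc ‖P₂ ∘L ((G₁ - G₂) ∘L P₁)‖ ≤ ‖P₂‖ * (‖G₁ - G₂‖ * ‖P₁‖) :=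
          (opNorm_comp_le _ _).trans (by gcongr; exact opNorm_comp_le _ _)
      _ = ‖P₂‖ * (‖G₂ - G₁‖ * ‖P₁‖) := by rw [norm_sub_rev]
  · exact (opNorm_comp_le _ _).trans
      (by gcongr; exact norm_comp_inv_mul_one_sub_comp_inv_le h₁ h₂ hrank)
  · calc ‖((R₂ - 1) * R₁) ∘L P₁‖ ≤ ‖P₂‖ * ‖G₂ - G₁‖ * ‖P₁‖ :=
          (opNorm_comp_le _ _).trans
            (by gcongr; exact norm_inv_comp_sub_one_mul_inv_comp_le h₁ h₂ hrank)
      _ = ‖P₂‖ * (‖G₂ - G₁‖ * ‖P₁‖) := by ring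

end IsMoorePenroseInverse

end ContinuousLinearMap

namespace Matrix

variable {l m n : Type*} [Fintype l] [Fintype m] [Fintype n] [DecidableEq n]

noncomputable def toL2Op : Matrix m n 𝕜 ≃ₗ[𝕜] (EuclideanSpace 𝕜 n →L[𝕜] EuclideanSpace 𝕜 m) :=
  toEuclideanLin.trans LinearMap.toContinuousLinearMap

lemma rank_eq_finrank_range_toL2Op (A : Matrix m n 𝕜) :
    A.rank = finrank 𝕜 (toL2Op A).range :=
  A.rank_eq_finrank_range_toLin (PiLp.basisFun 2 𝕜 m) (PiLp.basisFun 2 𝕜 n)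

variable [DecidableEq m]

lemma toL2Op_mul (A : Matrix l m 𝕜) (B : Matrix m n 𝕜) :
    toL2Op (A * B) = toL2Op A ∘L toL2Op B := by
  ext; simp [toL2Op]

lemma toL2Op_conjTranspose (A : Matrix m n 𝕜) : toL2Op Aᴴ = adjoint (toL2Op A) := by
  rw [toL2Op, LinearEquiv.trans_apply, toEuclideanLin_conjTranspose_eq_adjoint,
    LinearMap.adjoint_toContinuousLinearMap]
  rfl

lemma isSelfAdjoint_toL2Op {A : Matrix n n 𝕜} (hA : Aᴴ = A) : IsSelfAdjoint (toL2Op A) := by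
  rw [isSelfAdjoint_iff', ← toL2Op_conjTranspose, hA]

end Matrix

lemma IsMoorePenrose.isMoorePenroseInverse_toL2Op {m n : ℕ} {A : Matrix (Fin m) (Fin n) ℂ}
    {P : Matrix (Fin n) (Fin m) ℂ} (h : IsMoorePenrose A P) :
    (toL2Op A).IsMoorePenroseInverse (toL2Op P) := by
  obtain ⟨h₁, h₂, h₃, h₄⟩ := h
  refine ⟨?_, ?_, ?_, ?_⟩
  · rw [← toL2Op_mul, ← toL2Op_mul, ← Matrix.mul_assoc, h₁]
  · rw [← toL2Op_mul, ← toL2Op_mul, ← Matrix.mul_assoc, h₂]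
  · rw [← toL2Op_mul]; exact isSelfAdjoint_toL2Op h₃
  · rw [← toL2Op_mul]; exact isSelfAdjoint_toL2Op h₄

theorem pinv_perturbation_rank_deficient_general
    {m n : ℕ} (G₁ G₂ : Matrix (Fin m) (Fin n) ℂ)
    (heq : G₁.rank = G₂.rank)
    (P₁ P₂ : Matrix (Fin n) (Fin m) ℂ)
    (hP₁ : IsMoorePenrose G₁ P₁) (hP₂ : IsMoorePenrose G₂ P₂) :
    specNorm (P₂ - P₁) ≤
      (1 + Real.sqrt 5) / 2 * specNorm P₂ * specNorm P₁ * specNorm (G₂ - G₁) := by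
  have hrank : finrank ℂ (toL2Op G₁).range = finrank ℂ (toL2Op G₂).range := by
    rwa [← rank_eq_finrank_range_toL2Op, ← rank_eq_finrank_range_toL2Op]
  have := hP₁.isMoorePenroseInverse_toL2Op.norm_inv_sub_inv_le
    hP₂.isMoorePenroseInverse_toL2Op hrank
  rw [← map_sub, ← map_sub] at this
  -- `specNorm A` unfolds to `‖toL2Op A‖`, and `φ` to `(1 + √5) / 2`
  exact this

/-- Wedin, rank-deficient case.  Let `G₁, G₂ ∈ ℂ^{m×n}` with
`rank G₁ = rank G₂ < min{m,n}`.  Then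
`‖G₂⁺ − G₁⁺‖ ≤ ((1+√5)/2) · ‖G₂⁺‖ · ‖G₁⁺‖ · ‖G₂ − G₁‖` in the spectral norm. -/
theorem pinv_perturbation_rank_deficient
    {m n : ℕ} (G₁ G₂ : Matrix (Fin m) (Fin n) ℂ)
    (heq : G₁.rank = G₂.rank) (hlt : G₁.rank < min m n)
    (P₁ P₂ : Matrix (Fin n) (Fin m) ℂ)
    (hP₁ : IsMoorePenrose G₁ P₁) (hP₂ : IsMoorePenrose G₂ P₂) :
    specNorm (P₂ - P₁) ≤
      (1 + Real.sqrt 5) / 2 * specNorm P₂ * specNorm P₁ * specNorm (G₂ - G₁) :=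
  pinv_perturbation_rank_deficient_general G₁ G₂ heq P₁ P₂ hP₁ hP₂
end

section
/- Let 𝒜 = [Aᵀ, λLᵀ]ᵀ and 𝒜̃ = [(PPᵀA)ᵀ, λLᵀ]ᵀ both have full column rank n, where P has orthonormal columns and ‖PPᵀA − A‖ ≤ ε. Let x_λ = 𝒜⁺[bᵀ,0ᵀ]ᵀ and x̄_λ = 𝒜̃⁺[bᵀ,0ᵀ]ᵀ. Then ‖x̄_λ − x_λ‖ ≤ √2 · ε · ‖𝒜̃⁺‖ · ‖𝒜⁺‖ · ‖b‖. -/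
open Matrix

/-- `P` is the Moore–Penrose pseudoinverse of the real matrix `A`. -/
def IsMoorePenroseR {m n : Type*} [Fintype m] [Fintype n]
    (A : Matrix m n ℝ) (P : Matrix n m ℝ) : Prop :=
  A * P * A = A ∧ P * A * P = P ∧ (A * P)ᵀ = A * P ∧ (P * A)ᵀ = P * A

/-- The spectral norm (ℓ²-operator norm) of a real matrix. -/
noncomputable def specNormR {m n : Type*} [Fintype m] [Fintype n] [DecidableEq n]
    (A : Matrix m n ℝ) : ℝ :=
  ‖LinearMap.toContinuousLinearMap (Matrix.toEuclideanLin A)‖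

/-- The Euclidean (2-) norm of a real vector. -/
noncomputable def vnorm {ι : Type*} [Fintype ι] (v : ι → ℝ) : ℝ :=
  Real.sqrt (∑ i, v i ^ 2)

set_option linter.unusedSectionVars false
set_option linter.unusedVariables false
set_option maxHeartbeats 1000000

section Interface

variable {ι κ τ : Type*} [Fintype ι] [Fintype κ] [Fintype τ]
  [DecidableEq ι] [DecidableEq κ] [DecidableEq τ]

lemma vnorm_eq_norm (v : ι → ℝ) : vnorm v = ‖(WithLp.equiv 2 (ι → ℝ)).symm v‖ := by
  rw [EuclideanSpace.norm_eq, vnorm]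
  congr 1; apply Finset.sum_congr rfl; intro i _
  rw [Real.norm_eq_abs, sq_abs]; rfl

lemma vnorm_nonneg (v : ι → ℝ) : 0 ≤ vnorm v := Real.sqrt_nonneg _

lemma vnorm_sub_le (v w : ι → ℝ) : vnorm (v - w) ≤ vnorm v + vnorm w := by
  rw [vnorm_eq_norm, vnorm_eq_norm, vnorm_eq_norm]
  exact norm_sub_le _ _

lemma vnorm_neg (v : ι → ℝ) : vnorm (-v) = vnorm v := by
  unfold vnorm
  congr 1; apply Finset.sum_congr rfl; intro i _
  rw [Pi.neg_apply, neg_sq]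

lemma mulVec_vnorm_le (M : Matrix κ ι ℝ) (v : ι → ℝ) :
    vnorm (M *ᵥ v) ≤ specNormR M * vnorm v := by
  rw [vnorm_eq_norm, vnorm_eq_norm]
  have := (LinearMap.toContinuousLinearMap (Matrix.toEuclideanLin M)).le_opNorm
    ((WithLp.equiv 2 (ι → ℝ)).symm v)
  simpa [Matrix.toEuclideanLin_apply, specNormR] using this

lemma specNormR_le_bound {M : Matrix κ ι ℝ} {c : ℝ} (hc : 0 ≤ c)
    (h : ∀ v, vnorm (M *ᵥ v) ≤ c * vnorm v) : specNormR M ≤ c := by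
  apply ContinuousLinearMap.opNorm_le_bound _ hc
  intro x
  have := h ((WithLp.equiv 2 (ι → ℝ)) x)
  rw [vnorm_eq_norm, vnorm_eq_norm] at this
  simpa [Matrix.toEuclideanLin_apply] using this

lemma specNormR_nonneg (M : Matrix κ ι ℝ) : 0 ≤ specNormR M := norm_nonneg _

lemma vnorm_sq (v : ι → ℝ) : vnorm v ^ 2 = v ⬝ᵥ v := by
  rw [vnorm, Real.sq_sqrt (by positivity)]
  simp [dotProduct, sq]

lemma dotProduct_le (v w : ι → ℝ) : v ⬝ᵥ w ≤ vnorm v * vnorm w := by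
  have h := @real_inner_le_norm (EuclideanSpace ℝ ι) _ _
    ((WithLp.equiv 2 (ι → ℝ)).symm v) ((WithLp.equiv 2 (ι → ℝ)).symm w)
  have h2 : @inner ℝ (EuclideanSpace ℝ ι) _ ((WithLp.equiv 2 (ι → ℝ)).symm v)
      ((WithLp.equiv 2 (ι → ℝ)).symm w) = v ⬝ᵥ w := by
    simp [PiLp.inner_apply, RCLike.inner_apply, dotProduct, mul_comm]
  rw [h2, ← vnorm_eq_norm, ← vnorm_eq_norm] at h
  exact h

lemma vnorm_eq_zero {v : ι → ℝ} (h : vnorm v = 0) : v = 0 := by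
  have h2 : v ⬝ᵥ v = 0 := by rw [← vnorm_sq, h]; ring
  exact dotProduct_self_eq_zero.mp h2

lemma le_of_sq_le_sq' {a c : ℝ} (ha : 0 ≤ a) (hc : 0 ≤ c) (h : a ^ 2 ≤ c ^ 2) : a ≤ c := by
  nlinarith

lemma specNormR_mul_le (M : Matrix τ κ ℝ) (N : Matrix κ ι ℝ) :
    specNormR (M * N) ≤ specNormR M * specNormR N := by
  apply specNormR_le_bound (mul_nonneg (specNormR_nonneg M) (specNormR_nonneg N))
  intro v
  rw [← Matrix.mulVec_mulVec]
  calc vnorm (M *ᵥ (N *ᵥ v)) ≤ specNormR M * vnorm (N *ᵥ v) := mulVec_vnorm_le M _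
    _ ≤ specNormR M * (specNormR N * vnorm v) :=
      mul_le_mul_of_nonneg_left (mulVec_vnorm_le N v) (specNormR_nonneg M)
    _ = specNormR M * specNormR N * vnorm v := (mul_assoc _ _ _).symm

lemma specNormR_neg (M : Matrix κ ι ℝ) : specNormR (-M) = specNormR M := by
  have key : ∀ (N : Matrix κ ι ℝ), specNormR (-N) ≤ specNormR N := by
    intro N
    apply specNormR_le_bound (specNormR_nonneg N)
    intro v
    rw [Matrix.neg_mulVec, vnorm_neg]
    exact mulVec_vnorm_le N v
  have h2 := key (-M)
  rw [neg_neg] at h2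
  exact le_antisymm (key M) h2

lemma transpose_dot (M : Matrix κ ι ℝ) (x : κ → ℝ) (y : ι → ℝ) :
    (Mᵀ *ᵥ x) ⬝ᵥ y = x ⬝ᵥ (M *ᵥ y) := by
  rw [Matrix.mulVec_transpose, ← Matrix.dotProduct_mulVec]

lemma specNormR_transpose_le (M : Matrix κ ι ℝ) : specNormR Mᵀ ≤ specNormR M := by
  apply specNormR_le_bound (specNormR_nonneg M)
  intro v
  have h1 : vnorm (Mᵀ *ᵥ v) ^ 2 = v ⬝ᵥ (M *ᵥ (Mᵀ *ᵥ v)) :=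
    (vnorm_sq _).trans (transpose_dot M v (Mᵀ *ᵥ v))
  have h2 : v ⬝ᵥ (M *ᵥ (Mᵀ *ᵥ v)) ≤ vnorm v * (specNormR M * vnorm (Mᵀ *ᵥ v)) :=
    le_trans (dotProduct_le _ _)
      (mul_le_mul_of_nonneg_left (mulVec_vnorm_le M _) (vnorm_nonneg v))
  have h3 : vnorm (Mᵀ *ᵥ v) ^ 2 ≤ vnorm v * (specNormR M * vnorm (Mᵀ *ᵥ v)) := h1 ▸ h2
  rcases eq_or_lt_of_le (vnorm_nonneg (Mᵀ *ᵥ v)) with h0 | h0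
  · rw [← h0]; exact mul_nonneg (specNormR_nonneg M) (vnorm_nonneg v)
  · nlinarith

lemma specNormR_transpose (M : Matrix κ ι ℝ) : specNormR Mᵀ = specNormR M := by
  refine le_antisymm (specNormR_transpose_le M) ?_
  have h2 : specNormR Mᵀᵀ ≤ specNormR Mᵀ := specNormR_transpose_le Mᵀ
  rw [Matrix.transpose_transpose] at h2
  exact h2

section proj
variable {S : Matrix ι ι ℝ} (hs : Sᵀ = S) (hi : S * S = S)
include hs hi

lemma proj_dot (v : ι → ℝ) : (S *ᵥ v) ⬝ᵥ (S *ᵥ v) = v ⬝ᵥ (S *ᵥ v) := by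
  calc (S *ᵥ v) ⬝ᵥ (S *ᵥ v) = (v ᵥ* S) ⬝ᵥ (S *ᵥ v) := by
        nth_rewrite 1 [← hs]; rw [Matrix.mulVec_transpose]
    _ = v ⬝ᵥ (S *ᵥ (S *ᵥ v)) := (Matrix.dotProduct_mulVec v S _).symm
    _ = v ⬝ᵥ (S *ᵥ v) := by rw [Matrix.mulVec_mulVec, hi]

lemma proj_pythagoras (v : ι → ℝ) :
    vnorm (S *ᵥ v) ^ 2 + vnorm (v - S *ᵥ v) ^ 2 = vnorm v ^ 2 := by
  have h := proj_dot hs hi v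
  rw [vnorm_sq, vnorm_sq, vnorm_sq]
  simp only [sub_dotProduct, dotProduct_sub]
  have hc : (S *ᵥ v) ⬝ᵥ v = v ⬝ᵥ (S *ᵥ v) := dotProduct_comm _ _
  linarith

lemma proj_vnorm_le (v : ι → ℝ) : vnorm (S *ᵥ v) ≤ vnorm v := by
  apply le_of_sq_le_sq' (vnorm_nonneg _) (vnorm_nonneg _)
  have := proj_pythagoras hs hi v
  nlinarith [sq_nonneg (vnorm (v - S *ᵥ v))]

lemma proj_specNormR_le : specNormR S ≤ 1 := by
  apply specNormR_le_bound zero_le_one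
  intro v; rw [one_mul]; exact proj_vnorm_le hs hi v

end proj

lemma one_sub_symm {Q : Matrix ι ι ℝ} (hQs : Qᵀ = Q) : (1 - Q)ᵀ = 1 - Q := by
  rw [Matrix.transpose_sub, Matrix.transpose_one, hQs]

lemma one_sub_idem {Q : Matrix ι ι ℝ} (hQi : Q * Q = Q) : (1 - Q) * (1 - Q) = 1 - Q := by
  rw [Matrix.sub_mul, Matrix.one_mul, Matrix.mul_sub, Matrix.mul_one, hQi, sub_self, sub_zero]

lemma sub_mulVec_apply (Q : Matrix ι ι ℝ) (v : ι → ℝ) : (1 - Q) *ᵥ v = v - Q *ᵥ v := by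
  rw [Matrix.sub_mulVec, Matrix.one_mulVec]

lemma mulVecLin_inj {G : Matrix κ ι ℝ} (hr : G.rank = Fintype.card ι) :
    Function.Injective G.mulVecLin := by
  rw [← LinearMap.ker_eq_bot]
  have h := LinearMap.finrank_range_add_finrank_ker G.mulVecLin
  rw [Module.finrank_fintype_fun_eq_card] at h
  have hrk : Module.finrank ℝ (LinearMap.range G.mulVecLin) = Fintype.card ι := hr
  rw [← Submodule.finrank_eq_zero (R := ℝ)]
  omega

lemma left_inv_of_rank {G : Matrix κ ι ℝ} {Gp : Matrix ι κ ℝ}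
    (h1 : G * Gp * G = G) (hr : G.rank = Fintype.card ι) : Gp * G = 1 := by
  have hinj := mulVecLin_inj hr
  have hv : ∀ v, (Gp * G) *ᵥ v = v := by
    intro v
    apply hinj
    show G *ᵥ ((Gp * G) *ᵥ v) = G *ᵥ v
    rw [Matrix.mulVec_mulVec, ← Matrix.mul_assoc, h1]
  ext i j
  have h := congrFun (hv (Pi.single j 1)) i
  simp only [Matrix.mulVec_single, mul_one, MulOpposite.op_one, one_smul, Matrix.col_apply] at h
  rw [h, Matrix.one_apply, Pi.single_apply]

/-- Key "principal angles" swap lemma for orthogonal projections of equal rank. -/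
lemma swap_lemma (Q R : Matrix ι ι ℝ) (hQs : Qᵀ = Q) (hQi : Q * Q = Q)
    (hRs : Rᵀ = R) (hRi : R * R = R) (hrk : Q.rank = R.rank) :
    specNormR ((1 - Q) * R) ≤ specNormR ((1 - R) * Q) := by
  set c := specNormR ((1 - R) * Q) with hc
  have hc0 : 0 ≤ c := specNormR_nonneg _
  rcases le_or_gt 1 c with hc1 | hc1
  · calc specNormR ((1 - Q) * R) ≤ specNormR (1 - Q) * specNormR R := specNormR_mul_le _ _
      _ ≤ 1 * 1 := mul_le_mul (proj_specNormR_le (one_sub_symm hQs) (one_sub_idem hQi))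
            (proj_specNormR_le hRs hRi) (specNormR_nonneg _)
            (le_trans (specNormR_nonneg _) (proj_specNormR_le (one_sub_symm hQs) (one_sub_idem hQi)))
      _ = 1 := one_mul 1
      _ ≤ c := hc1
  · have hbound : ∀ v : ι → ℝ, Q *ᵥ v = v → vnorm (v - R *ᵥ v) ≤ c * vnorm v := by
      intro v hv
      have h : ((1 - R) * Q) *ᵥ v = v - R *ᵥ v := by
        rw [← Matrix.mulVec_mulVec, hv, sub_mulVec_apply]
      calc vnorm (v - R *ᵥ v) = vnorm (((1 - R) * Q) *ᵥ v) := by rw [h]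
        _ ≤ c * vnorm v := mulVec_vnorm_le _ _
    have hsurj : ∀ u : ι → ℝ, R *ᵥ u = u → ∃ v, Q *ᵥ v = v ∧ R *ᵥ v = u := by
      have hQproj : ∀ x : ι → ℝ, x ∈ LinearMap.range Q.mulVecLin ↔ Q *ᵥ x = x := by
        intro x
        constructor
        · rintro ⟨z, rfl⟩
          show Q *ᵥ (Q *ᵥ z) = Q *ᵥ z
          rw [Matrix.mulVec_mulVec, hQi]
        · intro hx; exact ⟨x, hx⟩
      have hRproj : ∀ x : ι → ℝ, x ∈ LinearMap.range R.mulVecLin ↔ R *ᵥ x = x := by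
        intro x
        constructor
        · rintro ⟨z, rfl⟩
          show R *ᵥ (R *ᵥ z) = R *ᵥ z
          rw [Matrix.mulVec_mulVec, hRi]
        · intro hx; exact ⟨x, hx⟩
      set VQ := LinearMap.range Q.mulVecLin with hVQ
      set VR := LinearMap.range R.mulVecLin with hVR
      have hmem : ∀ x : VQ, R *ᵥ (x : ι → ℝ) ∈ VR := fun x => ⟨(x : ι → ℝ), rfl⟩
      let φ : VQ →ₗ[ℝ] VR :=
        LinearMap.codRestrict VR (R.mulVecLin.comp VQ.subtype) hmem
      have hφinj : Function.Injective φ := by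
        rw [← LinearMap.ker_eq_bot, LinearMap.ker_eq_bot']
        rintro ⟨v, hvQ⟩ hφv
        have hRv : R *ᵥ v = 0 := congrArg Subtype.val hφv
        have hQv : Q *ᵥ v = v := (hQproj v).mp hvQ
        have h1 : vnorm (v - R *ᵥ v) ≤ c * vnorm v := hbound v hQv
        rw [hRv, sub_zero] at h1
        have hv0 : vnorm v = 0 := by nlinarith [vnorm_nonneg v]
        exact Subtype.ext (vnorm_eq_zero hv0)
      have hdim : Module.finrank ℝ VQ = Module.finrank ℝ VR := hrk
      have hφsurj : Function.Surjective φ :=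
        (LinearMap.injective_iff_surjective_of_finrank_eq_finrank hdim).mp hφinj
      intro u hu
      obtain ⟨⟨v, hvQ⟩, hφv⟩ := hφsurj ⟨u, (hRproj u).mpr hu⟩
      exact ⟨v, (hQproj v).mp hvQ, congrArg Subtype.val hφv⟩
    have hkey : ∀ u : ι → ℝ, R *ᵥ u = u → vnorm (u - Q *ᵥ u) ≤ c * vnorm u := by
      intro u hu
      obtain ⟨v, hQv, hRv⟩ := hsurj u hu
      have e1 : u ⬝ᵥ u = (Q *ᵥ u) ⬝ᵥ v := by
        calc u ⬝ᵥ u = u ⬝ᵥ (R *ᵥ v) := by rw [hRv]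
          _ = (Rᵀ *ᵥ u) ⬝ᵥ v := (transpose_dot R u v).symm
          _ = u ⬝ᵥ v := by rw [hRs, hu]
          _ = u ⬝ᵥ (Q *ᵥ v) := by rw [hQv]
          _ = (Qᵀ *ᵥ u) ⬝ᵥ v := (transpose_dot Q u v).symm
          _ = (Q *ᵥ u) ⬝ᵥ v := by rw [hQs]
      have e2 : vnorm u ^ 2 ≤ vnorm (Q *ᵥ u) * vnorm v := by
        rw [vnorm_sq, e1]; exact dotProduct_le _ _
      have e3 : (1 - c ^ 2) * vnorm v ^ 2 ≤ vnorm u ^ 2 := by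
        have hp := proj_pythagoras hRs hRi v
        have hb := hbound v hQv
        have h4 : vnorm (v - R *ᵥ v) ^ 2 ≤ c ^ 2 * vnorm v ^ 2 := by
          nlinarith [vnorm_nonneg (v - R *ᵥ v), vnorm_nonneg v]
        rw [hRv] at hp h4
        linarith
      have e4 : (1 - c ^ 2) * vnorm u ^ 2 ≤ vnorm (Q *ᵥ u) ^ 2 := by
        rcases eq_or_lt_of_le (vnorm_nonneg u) with ha | ha
        · rw [← ha]
          have := sq_nonneg (vnorm (Q *ᵥ u))
          nlinarith
        · have h5 : (vnorm u ^ 2) ^ 2 ≤ (vnorm (Q *ᵥ u) * vnorm v) ^ 2 :=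
            pow_le_pow_left₀ (sq_nonneg _) e2 2
          have h6 : 0 ≤ vnorm (Q *ᵥ u) ^ 2 := sq_nonneg _
          have h7 := mul_le_mul_of_nonneg_left e3 h6
          have hs : 0 < 1 - c ^ 2 := by nlinarith
          nlinarith [mul_pos ha ha, mul_le_mul_of_nonneg_left h5 (le_of_lt hs)]
      have hp2 := proj_pythagoras hQs hQi u
      apply le_of_sq_le_sq' (vnorm_nonneg _) (mul_nonneg hc0 (vnorm_nonneg u))
      calc vnorm (u - Q *ᵥ u) ^ 2 = vnorm u ^ 2 - vnorm (Q *ᵥ u) ^ 2 := by linarith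
        _ ≤ c ^ 2 * vnorm u ^ 2 := by nlinarith
        _ = (c * vnorm u) ^ 2 := by ring
    apply specNormR_le_bound hc0
    intro x
    have hx1 : ((1 - Q) * R) *ᵥ x = (R *ᵥ x) - Q *ᵥ (R *ᵥ x) := by
      rw [← Matrix.mulVec_mulVec, sub_mulVec_apply]
    have hRu : R *ᵥ (R *ᵥ x) = R *ᵥ x := by rw [Matrix.mulVec_mulVec, hRi]
    calc vnorm (((1 - Q) * R) *ᵥ x) = vnorm ((R *ᵥ x) - Q *ᵥ (R *ᵥ x)) := by rw [hx1]
      _ ≤ c * vnorm (R *ᵥ x) := hkey _ hRu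
      _ ≤ c * vnorm x := mul_le_mul_of_nonneg_left (proj_vnorm_le hRs hRi x) hc0

end Interface

lemma vnorm_sum_elim_zero {α β : Type*} [Fintype α] [Fintype β] (w : α → ℝ) :
    vnorm (Sum.elim w (0 : β → ℝ)) = vnorm w := by
  unfold vnorm
  congr 1
  rw [Fintype.sum_sum_type]
  simp

/-- Let `𝒜 = [Aᵀ, λLᵀ]ᵀ` and `𝒜̃ = [(PPᵀA)ᵀ, λLᵀ]ᵀ` both have full
column rank `n`, where `P` has orthonormal columns and `‖PPᵀA − A‖ ≤ ε`.  Let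
`x_λ = 𝒜⁺[bᵀ,0ᵀ]ᵀ` and `x̄_λ = 𝒜̃⁺[bᵀ,0ᵀ]ᵀ`.  Then
`‖x̄_λ − x_λ‖ ≤ √2 · ε · ‖𝒜̃⁺‖ · ‖𝒜⁺‖ · ‖b‖`. -/
theorem perturbed_tikhonov_solution_bound
    {m p n ℓ₁ : ℕ} (hnm : n ≤ m)
    (A : Matrix (Fin m) (Fin n) ℝ) (L : Matrix (Fin p) (Fin n) ℝ)
    {lam : ℝ} (hlam : lam ≠ 0) {ε : ℝ}
    (P : Matrix (Fin m) (Fin ℓ₁) ℝ) (hP : Pᵀ * P = 1)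
    (hrank : (Matrix.fromRows A (lam • L)).rank = n)
    (hrank' : (Matrix.fromRows (P * Pᵀ * A) (lam • L)).rank = n)
    (hpert : specNormR (P * Pᵀ * A - A) ≤ ε)
    (b : Fin m → ℝ)
    (PA : Matrix (Fin n) (Fin m ⊕ Fin p) ℝ)
    (hPA : IsMoorePenroseR (Matrix.fromRows A (lam • L)) PA)
    (PAt : Matrix (Fin n) (Fin m ⊕ Fin p) ℝ)
    (hPAt : IsMoorePenroseR (Matrix.fromRows (P * Pᵀ * A) (lam • L)) PAt) :
    vnorm (PAt.mulVec (Sum.elim b 0) - PA.mulVec (Sum.elim b 0)) ≤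
      Real.sqrt 2 * ε * specNormR PAt * specNormR PA * vnorm b := by
  set G := Matrix.fromRows A (lam • L) with hG
  set Gt := Matrix.fromRows (P * Pᵀ * A) (lam • L) with hGt
  obtain ⟨g1, g2, g3, g4⟩ := hPA
  obtain ⟨t1, t2, t3, t4⟩ := hPAt
  set E := Gt - G with hE
  -- the perturbation bound for E
  have hEb : specNormR E ≤ ε := by
    have hEeq : E = Matrix.fromRows (P * Pᵀ * A - A) (0 : Matrix (Fin p) (Fin n) ℝ) := by
      ext i j
      cases i with
      | inl i => simp [hE, hGt, hG, Matrix.sub_apply]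
      | inr i => simp [hE, hGt, hG, Matrix.sub_apply]
    have : ∀ v, vnorm (E *ᵥ v) ≤ specNormR (P * Pᵀ * A - A) * vnorm v := by
      intro v
      rw [hEeq, Matrix.fromRows_mulVec, Matrix.zero_mulVec]
      rw [show (P * Pᵀ * A - A) *ᵥ v ⊕ᵥ (0 : Fin p → ℝ)
          = Sum.elim ((P * Pᵀ * A - A) *ᵥ v) (0 : Fin p → ℝ) from rfl]
      rw [vnorm_sum_elim_zero]
      exact mulVec_vnorm_le _ v
    have h0 : (0:ℝ) ≤ ε := le_trans (specNormR_nonneg _) hpert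
    apply specNormR_le_bound h0
    intro v
    exact le_trans (this v) (mul_le_mul_of_nonneg_right hpert (vnorm_nonneg v))
  have hε0 : (0:ℝ) ≤ ε := le_trans (specNormR_nonneg _) hpert
  -- left inverses
  have hcard : G.rank = Fintype.card (Fin n) := by rw [hrank, Fintype.card_fin]
  have hcard' : Gt.rank = Fintype.card (Fin n) := by rw [hrank', Fintype.card_fin]
  have hL : PA * G = 1 := left_inv_of_rank g1 hcard
  have hLt : PAt * Gt = 1 := left_inv_of_rank t1 hcard'
  -- projections
  set Q := G * PA with hQ
  set R := Gt * PAt with hR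
  have hQs : Qᵀ = Q := g3
  have hRs : Rᵀ = R := t3
  have hQi : Q * Q = Q := by
    rw [hQ, Matrix.mul_assoc, ← Matrix.mul_assoc PA G PA, hL, Matrix.one_mul]
  have hRi : R * R = R := by
    rw [hR, Matrix.mul_assoc, ← Matrix.mul_assoc PAt Gt PAt, hLt, Matrix.one_mul]
  -- ranks
  have hrkQ : Q.rank = n := by
    apply le_antisymm
    · exact le_trans (Matrix.rank_mul_le_left G PA) (le_of_eq hrank)
    · have h1 : (1 : Matrix (Fin n) (Fin n) ℝ) = (PA * Q) * G := by
        rw [hQ, ← Matrix.mul_assoc, hL, Matrix.one_mul, hL]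
      calc n = (1 : Matrix (Fin n) (Fin n) ℝ).rank := by rw [Matrix.rank_one, Fintype.card_fin]
        _ = ((PA * Q) * G).rank := by rw [← h1]
        _ ≤ (PA * Q).rank := Matrix.rank_mul_le_left _ _
        _ ≤ Q.rank := Matrix.rank_mul_le_right _ _
  have hrkR : R.rank = n := by
    apply le_antisymm
    · exact le_trans (Matrix.rank_mul_le_left Gt PAt) (le_of_eq hrank')
    · have h1 : (1 : Matrix (Fin n) (Fin n) ℝ) = (PAt * R) * Gt := by
        rw [hR, ← Matrix.mul_assoc, hLt, Matrix.one_mul, hLt]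
      calc n = (1 : Matrix (Fin n) (Fin n) ℝ).rank := by rw [Matrix.rank_one, Fintype.card_fin]
        _ = ((PAt * R) * Gt).rank := by rw [← h1]
        _ ≤ (PAt * R).rank := Matrix.rank_mul_le_left _ _
        _ ≤ R.rank := Matrix.rank_mul_le_right _ _
  have hrk : Q.rank = R.rank := by rw [hrkQ, hrkR]
  -- main matrix identity
  have hid : PAt - PA = PAt * (1 - Q) - PAt * E * PA := by
    have h1 : PAt * E * PA = PAt * Gt * PA - PAt * G * PA := by
      rw [hE, Matrix.mul_sub, Matrix.sub_mul]
    have h2 : PAt * (1 - Q) = PAt - PAt * G * PA := by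
      rw [Matrix.mul_sub, Matrix.mul_one, hQ, ← Matrix.mul_assoc]
    rw [h1, h2, hLt, Matrix.one_mul]
    abel
  have hPR : PAt * R = PAt := by rw [hR, ← Matrix.mul_assoc]; exact t2
  -- vector level
  set y : Fin m ⊕ Fin p → ℝ := Sum.elim b 0 with hy
  set z : Fin m ⊕ Fin p → ℝ := y - Q *ᵥ y with hz
  -- term 1 bound
  have hPAQ : PA * Q = PA := by rw [hQ, ← Matrix.mul_assoc]; exact g2
  have ht1 : vnorm ((PAt * E * PA) *ᵥ y) ≤
      specNormR PAt * (ε * specNormR PA * vnorm (Q *ᵥ y)) := by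
    have hMQ : PAt * E * PA * Q = PAt * E * PA := by rw [Matrix.mul_assoc, hPAQ]
    have hre : (PAt * E * PA) *ᵥ y = PAt *ᵥ (E *ᵥ (PA *ᵥ (Q *ᵥ y))) := by
      simp only [Matrix.mulVec_mulVec]
      rw [hPAQ, ← Matrix.mul_assoc]
    rw [hre]
    calc vnorm (PAt *ᵥ (E *ᵥ (PA *ᵥ (Q *ᵥ y))))
        ≤ specNormR PAt * vnorm (E *ᵥ (PA *ᵥ (Q *ᵥ y))) := mulVec_vnorm_le _ _
      _ ≤ specNormR PAt * (specNormR E * vnorm (PA *ᵥ (Q *ᵥ y))) :=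
          mul_le_mul_of_nonneg_left (mulVec_vnorm_le _ _) (specNormR_nonneg _)
      _ ≤ specNormR PAt * (specNormR E * (specNormR PA * vnorm (Q *ᵥ y))) := by
          apply mul_le_mul_of_nonneg_left _ (specNormR_nonneg _)
          exact mul_le_mul_of_nonneg_left (mulVec_vnorm_le _ _) (specNormR_nonneg _)
      _ ≤ specNormR PAt * (ε * (specNormR PA * vnorm (Q *ᵥ y))) := by
          apply mul_le_mul_of_nonneg_left _ (specNormR_nonneg _)
          apply mul_le_mul_of_nonneg_right hEb
          exact mul_nonneg (specNormR_nonneg _) (vnorm_nonneg _)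
      _ = specNormR PAt * (ε * specNormR PA * vnorm (Q *ᵥ y)) := by ring
  -- term 2 bound
  have hsn2 : specNormR (R * (1 - Q)) ≤ ε * specNormR PA := by
    have hTr : (R * (1 - Q))ᵀ = (1 - Q) * R := by
      rw [Matrix.transpose_mul, one_sub_symm hQs, hRs]
    have h1 : specNormR (R * (1 - Q)) = specNormR ((1 - Q) * R) := by
      rw [← hTr, specNormR_transpose]
    have h2 := swap_lemma Q R hQs hQi hRs hRi hrk
    have h3 : (1 - R) * Q = -((1 - R) * E * PA) := by
      have hRGt : (1 - R) * Gt = 0 := by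
        rw [Matrix.sub_mul, Matrix.one_mul, hR, Matrix.mul_assoc, ← Matrix.mul_assoc Gt PAt Gt, t1, sub_self]
      have hRG : (1 - R) * G = -((1 - R) * E) := by
        have : G = Gt - E := by rw [hE]; abel
        rw [this, Matrix.mul_sub, hRGt, zero_sub]
      rw [hQ, ← Matrix.mul_assoc, hRG, Matrix.neg_mul]
    have h4 : specNormR ((1 - R) * Q) ≤ ε * specNormR PA := by
      rw [h3, specNormR_neg]
      calc specNormR ((1 - R) * E * PA) ≤ specNormR ((1 - R) * E) * specNormR PA :=
            specNormR_mul_le _ _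
        _ ≤ specNormR (1 - R) * specNormR E * specNormR PA := by
            apply mul_le_mul_of_nonneg_right (specNormR_mul_le _ _) (specNormR_nonneg _)
        _ ≤ 1 * ε * specNormR PA := by
            apply mul_le_mul_of_nonneg_right _ (specNormR_nonneg _)
            exact mul_le_mul (proj_specNormR_le (one_sub_symm hRs) (one_sub_idem hRi)) hEb
              (specNormR_nonneg _) zero_le_one
        _ = ε * specNormR PA := by ring
    calc specNormR (R * (1 - Q)) = specNormR ((1 - Q) * R) := h1
      _ ≤ specNormR ((1 - R) * Q) := h2
      _ ≤ ε * specNormR PA := h4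
  have ht2 : vnorm ((PAt * (1 - Q)) *ᵥ y) ≤
      specNormR PAt * (ε * specNormR PA * vnorm z) := by
    have hQz : Q *ᵥ z = 0 := by
      rw [hz, Matrix.mulVec_sub, Matrix.mulVec_mulVec, hQi, sub_self]
    have hzz : (1 - Q) *ᵥ z = z := by rw [sub_mulVec_apply, hQz, sub_zero]
    have hre : (PAt * (1 - Q)) *ᵥ y = PAt *ᵥ ((R * (1 - Q)) *ᵥ z) := by
      have r1 : (R * (1 - Q)) *ᵥ z = R *ᵥ z := by rw [← Matrix.mulVec_mulVec, hzz]
      have r2 : (PAt * (1 - Q)) *ᵥ y = PAt *ᵥ z := by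
        rw [← Matrix.mulVec_mulVec, sub_mulVec_apply, ← hz]
      rw [r1, Matrix.mulVec_mulVec, hPR, r2]
    rw [hre]
    calc vnorm (PAt *ᵥ ((R * (1 - Q)) *ᵥ z))
        ≤ specNormR PAt * vnorm ((R * (1 - Q)) *ᵥ z) := mulVec_vnorm_le _ _
      _ ≤ specNormR PAt * (specNormR (R * (1 - Q)) * vnorm z) :=
          mul_le_mul_of_nonneg_left (mulVec_vnorm_le _ _) (specNormR_nonneg _)
      _ ≤ specNormR PAt * (ε * specNormR PA * vnorm z) := by
          apply mul_le_mul_of_nonneg_left _ (specNormR_nonneg _)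
          exact mul_le_mul_of_nonneg_right hsn2 (vnorm_nonneg _)
  -- combine
  have hsplit : vnorm (Q *ᵥ y) + vnorm z ≤ Real.sqrt 2 * vnorm y := by
    have hp := proj_pythagoras hQs hQi y
    apply le_of_sq_le_sq' (add_nonneg (vnorm_nonneg _) (vnorm_nonneg _))
      (mul_nonneg (Real.sqrt_nonneg 2) (vnorm_nonneg _))
    have h2 : (Real.sqrt 2 * vnorm y) ^ 2 = 2 * vnorm y ^ 2 := by
      rw [mul_pow, Real.sq_sqrt (by norm_num : (0:ℝ) ≤ 2)]
    rw [h2, hz]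
    nlinarith [sq_nonneg (vnorm (Q *ᵥ y) - vnorm (y - Q *ᵥ y))]
  have hdiff : PAt *ᵥ y - PA *ᵥ y = (PAt * (1 - Q)) *ᵥ y - (PAt * E * PA) *ᵥ y := by
    rw [← Matrix.sub_mulVec, ← Matrix.sub_mulVec, hid]
  have hyb : vnorm y = vnorm b := vnorm_sum_elim_zero b
  calc vnorm (PAt *ᵥ y - PA *ᵥ y)
      = vnorm ((PAt * (1 - Q)) *ᵥ y - (PAt * E * PA) *ᵥ y) := by rw [hdiff]
    _ ≤ vnorm ((PAt * (1 - Q)) *ᵥ y) + vnorm ((PAt * E * PA) *ᵥ y) := vnorm_sub_le _ _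
    _ ≤ specNormR PAt * (ε * specNormR PA * vnorm z)
        + specNormR PAt * (ε * specNormR PA * vnorm (Q *ᵥ y)) := add_le_add ht2 ht1
    _ = specNormR PAt * (ε * specNormR PA) * (vnorm (Q *ᵥ y) + vnorm z) := by ring
    _ ≤ specNormR PAt * (ε * specNormR PA) * (Real.sqrt 2 * vnorm y) := by
        apply mul_le_mul_of_nonneg_left hsplit
        exact mul_nonneg (specNormR_nonneg _) (mul_nonneg hε0 (specNormR_nonneg _))
    _ = Real.sqrt 2 * ε * specNormR PAt * specNormR PA * vnorm b := by
        rw [hyb]; ring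
end
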